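/- arXiv:math/0604397 — 12 statements merged into one kernel-verified Lean document; each statement's English description precedes it below -/
import Mathlib

section
/- For all x ≥ 0, σ²(x) = ∑_j e^{−p_j x}·(1 − (1 + p_j x)e^{−p_j x}) + (x/2)·∑_{i,j} p_i p_j (e^{−p_i x} − e^{−p_j x})². In particular, since all terms in both sums are nonnegative, σ²(x) ≥ 0 always, and for any probability mass function p with at least two values of positive probability, σ²(x) > 0 for every x > 0. -/
open Real

noncomputable def vF (p : ℕ → ℝ) (x : ℝ) : ℝ :=
  ∑' j, Real.exp (-(p j) * x) * (1 - Real.exp (-(p j) * x))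

noncomputable def uF (p : ℕ → ℝ) (x : ℝ) : ℝ :=
  ∑' j, p j * x * Real.exp (-(p j) * x)

/-- `σ²(x) = v(x) − u(x)²/x` for `x > 0`; note that for `x = 0` this formula also
gives `σ²(0) = 0` (division by zero is zero, and `v(0) = 0`). -/
noncomputable def sigma2F (p : ℕ → ℝ) (x : ℝ) : ℝ := vF p x - (uF p x) ^ 2 / x

/-- Abstract key identity with `q j` playing the role of `exp (-(p j) x)`. -/
theorem key_identity (p q : ℕ → ℝ) (x : ℝ) (hx : 0 ≤ x)
    (hsp : Summable p) (hp1 : (∑' j, p j) = 1)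
    (hp0 : ∀ j, 0 ≤ p j) (hq0 : ∀ j, 0 ≤ q j) (hq1 : ∀ j, q j ≤ 1)
    (hbound : ∀ j, 1 - q j ≤ p j * x) :
    (∑' j, q j * (1 - q j)) - (x * ∑' j, p j * q j) ^ 2 / x
      = (∑' j, q j * (1 - (1 + p j * x) * q j))
        + x / 2 * ∑' i, ∑' j, p i * p j * (q i - q j) ^ 2 := by
  have hs1 : Summable fun j => p j * q j :=
    hsp.of_nonneg_of_le (fun j => mul_nonneg (hp0 j) (hq0 j))
      (fun j => by nlinarith [hq1 j, hp0 j, hq0 j])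
  have hs2 : Summable fun j => p j * q j ^ 2 :=
    hsp.of_nonneg_of_le (fun j => mul_nonneg (hp0 j) (sq_nonneg _))
      (fun j => mul_le_of_le_one_right (hp0 j) (by nlinarith [hq0 j, hq1 j]))
  have hsA : Summable fun j => q j * (1 - q j) :=
    (hsp.mul_right x).of_nonneg_of_le
      (fun j => mul_nonneg (hq0 j) (by linarith [hq1 j]))
      (fun j => by nlinarith [hq0 j, hq1 j, hbound j])
  set S1 := ∑' j, p j * q j with hS1
  set S2 := ∑' j, p j * q j ^ 2 with hS2
  have hfirst : (∑' j, q j * (1 - (1 + p j * x) * q j))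
      = (∑' j, q j * (1 - q j)) - x * S2 := by
    have h1 : (fun j => q j * (1 - (1 + p j * x) * q j))
        = fun j => q j * (1 - q j) - x * (p j * q j ^ 2) := by
      funext j; ring
    rw [h1, Summable.tsum_sub hsA (hs2.mul_left x), tsum_mul_left, ← hS2]
  have hinner : ∀ i, (∑' j, p i * p j * (q i - q j) ^ 2)
      = p i * q i ^ 2 - 2 * (p i * q i) * S1 + p i * S2 := by
    intro i
    have h1 : (fun j => p i * p j * (q i - q j) ^ 2)
        = fun j => ((p i * q i ^ 2) * p j - (2 * (p i * q i)) * (p j * q j))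
            + (p i) * (p j * q j ^ 2) := by
      funext j; ring
    rw [h1, Summable.tsum_add ((hsp.mul_left _).sub (hs1.mul_left _)) (hs2.mul_left _),
      Summable.tsum_sub (hsp.mul_left _) (hs1.mul_left _), tsum_mul_left, tsum_mul_left,
      tsum_mul_left, hp1, ← hS1, ← hS2]
    ring
  have houter : (∑' i, ∑' j, p i * p j * (q i - q j) ^ 2) = 2 * S2 - 2 * S1 ^ 2 := by
    rw [tsum_congr hinner]
    have h2 : (fun i => p i * q i ^ 2 - 2 * (p i * q i) * S1 + p i * S2)
        = fun i => ((p i * q i ^ 2) - (2 * S1) * (p i * q i)) + S2 * p i := by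
      funext i; ring
    rw [h2, Summable.tsum_add (hs2.sub (hs1.mul_left _)) (hsp.mul_left _),
      Summable.tsum_sub hs2 (hs1.mul_left _), tsum_mul_left, tsum_mul_left, hp1, ← hS1, ← hS2]
    ring
  have hxS : (x * S1) ^ 2 / x = x * S1 ^ 2 := by
    rcases eq_or_lt_of_le hx with h | h
    · simp [← h]
    · field_simp
  rw [hfirst, houter, hxS]
  ring

/-- Proposition 2.2: the alternative formula for `σ²(x)`, its
nonnegativity, and strict positivity for `x > 0` when `p` has at least two atoms. -/
theorem sigma2_eq_and_pos (p : ℕ → ℝ) (hp0 : ∀ j, 0 ≤ p j) (hp1 : (∑' j, p j) = 1)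
    (x : ℝ) (hx : 0 ≤ x) :
    sigma2F p x
        = (∑' j, Real.exp (-(p j) * x) * (1 - (1 + p j * x) * Real.exp (-(p j) * x)))
          + x / 2 * ∑' i, ∑' j,
              p i * p j * (Real.exp (-(p i) * x) - Real.exp (-(p j) * x)) ^ 2
      ∧ 0 ≤ sigma2F p x
      ∧ (0 < x → (∃ i j, i ≠ j ∧ 0 < p i ∧ 0 < p j) → 0 < sigma2F p x) := by
  have hsp : Summable p := by
    by_contra h
    rw [tsum_eq_zero_of_not_summable h] at hp1
    norm_num at hp1
  have hq0 : ∀ j, (0:ℝ) ≤ Real.exp (-(p j) * x) := fun j => (Real.exp_pos _).le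
  have hq1 : ∀ j, Real.exp (-(p j) * x) ≤ 1 := by
    intro j
    have h : -(p j) * x ≤ 0 := by nlinarith [hp0 j]
    calc Real.exp (-(p j) * x) ≤ Real.exp 0 := Real.exp_le_exp.mpr h
    _ = 1 := Real.exp_zero
  have hqe : ∀ j, Real.exp (-(p j) * x) * Real.exp (p j * x) = 1 := by
    intro j
    rw [← Real.exp_add, show -(p j) * x + p j * x = 0 by ring, Real.exp_zero]
  have hbound : ∀ j, 1 - Real.exp (-(p j) * x) ≤ p j * x := by
    intro j
    have h := Real.add_one_le_exp (-(p j) * x)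
    linarith
  -- nonnegativity of the first-sum terms
  have hterm_nonneg : ∀ j,
      0 ≤ Real.exp (-(p j) * x) * (1 - (1 + p j * x) * Real.exp (-(p j) * x)) := by
    intro j
    have h := Real.add_one_le_exp (p j * x)
    have h2 := hqe j
    have h3 := hq0 j
    have h4 : (1 + p j * x) * Real.exp (-(p j) * x) ≤ 1 := by
      nlinarith [mul_le_mul_of_nonneg_left h h3]
    exact mul_nonneg h3 (by linarith)
  have hdbl_nonneg : 0 ≤ ∑' i, ∑' j,
      p i * p j * (Real.exp (-(p i) * x) - Real.exp (-(p j) * x)) ^ 2 :=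
    tsum_nonneg fun i => tsum_nonneg fun j =>
      mul_nonneg (mul_nonneg (hp0 i) (hp0 j)) (sq_nonneg _)
  -- the main identity
  have hu : uF p x = x * ∑' j, p j * Real.exp (-(p j) * x) := by
    have h : uF p x = ∑' j, x * (p j * Real.exp (-(p j) * x)) :=
      tsum_congr fun j => by ring
    rw [h, tsum_mul_left]
  have heq : sigma2F p x
      = (∑' j, Real.exp (-(p j) * x) * (1 - (1 + p j * x) * Real.exp (-(p j) * x)))
        + x / 2 * ∑' i, ∑' j,
            p i * p j * (Real.exp (-(p i) * x) - Real.exp (-(p j) * x)) ^ 2 := by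
    have hk := key_identity p (fun j => Real.exp (-(p j) * x)) x hx hsp hp1 hp0
      hq0 hq1 hbound
    unfold sigma2F
    rw [hu]
    exact hk
  refine ⟨heq, ?_, ?_⟩
  · rw [heq]
    exact add_nonneg (tsum_nonneg hterm_nonneg)
      (mul_nonneg (by linarith) hdbl_nonneg)
  · rintro hxpos ⟨i, j, hij, hpi, hpj⟩
    rw [heq]
    have hs2 : Summable fun j => p j * Real.exp (-(p j) * x) ^ 2 :=
      hsp.of_nonneg_of_le (fun j => mul_nonneg (hp0 j) (sq_nonneg _))
        (fun j => mul_le_of_le_one_right (hp0 j) (by nlinarith [hq0 j, hq1 j]))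
    have hsA : Summable fun j => Real.exp (-(p j) * x) * (1 - Real.exp (-(p j) * x)) :=
      (hsp.mul_right x).of_nonneg_of_le
        (fun j => mul_nonneg (hq0 j) (by linarith [hq1 j]))
        (fun j => by nlinarith [hq0 j, hq1 j, hbound j])
    have hs_first : Summable fun j =>
        Real.exp (-(p j) * x) * (1 - (1 + p j * x) * Real.exp (-(p j) * x)) := by
      have h1 : (fun j =>
          Real.exp (-(p j) * x) * (1 - (1 + p j * x) * Real.exp (-(p j) * x)))
          = fun j => Real.exp (-(p j) * x) * (1 - Real.exp (-(p j) * x))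
              - x * (p j * Real.exp (-(p j) * x) ^ 2) := by
        funext j; ring
      rw [h1]
      exact hsA.sub (hs2.mul_left x)
    have hpos_i : 0 < Real.exp (-(p i) * x)
        * (1 - (1 + p i * x) * Real.exp (-(p i) * x)) := by
      have ht : p i * x ≠ 0 := ne_of_gt (mul_pos hpi hxpos)
      have h := Real.add_one_lt_exp ht
      have h2 := hqe i
      have h3 := Real.exp_pos (-(p i) * x)
      have h4 : (1 + p i * x) * Real.exp (-(p i) * x) < 1 := by
        nlinarith [mul_lt_mul_of_pos_left h h3]
      exact mul_pos h3 (by linarith)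
    have h1 : 0 < ∑' j, Real.exp (-(p j) * x)
        * (1 - (1 + p j * x) * Real.exp (-(p j) * x)) :=
      Summable.tsum_pos hs_first hterm_nonneg i hpos_i
    have h2 : 0 ≤ x / 2 * ∑' i, ∑' j,
        p i * p j * (Real.exp (-(p i) * x) - Real.exp (-(p j) * x)) ^ 2 :=
      mul_nonneg (by linarith) hdbl_nonneg
    linarith
end

section
/- There exists an absolute constant C > 0 such that for every probability mass function p on ℕ and every n ∈ ℕ, |E[Z_n] − μ(n)| ≤ C, where E[Z_n] = ∑_j (1 − (1 − p_j)^n). -/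
open MeasureTheory ProbabilityTheory Real Finset

/-!
Write `A_j` for the event that some `X_i` takes the value `j`. Then `Z_n = ∑_j 1_{A_j}`, and
independence gives `ℙ(A_j) = 1 - (1 - p_j)^n`, so `E[Z_n] - μ(n) = ∑_j (e^{-p_j n} - (1 - p_j)^n)`.
Each term lies in `[0, p_j]`: from `1 - p ≥ e^{-p} (1 - p²)` and Bernoulli's inequality,
`(1 - p)^n ≥ e^{-pn} (1 - n p²)`, so the term is at most `p · (pn e^{-pn}) ≤ p`.
Hence `|E[Z_n] - μ(n)| ≤ ∑_j p_j = 1`.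
-/

lemma mul_exp_neg_le_one (x : ℝ) : x * exp (-x) ≤ 1 :=
  calc x * exp (-x) ≤ exp x * exp (-x) := by
        gcongr
        linarith [add_one_le_exp x]
    _ = 1 := by rw [← exp_add, add_neg_cancel, exp_zero]

lemma one_sub_pow_le_exp_neg_mul {p : ℝ} (hp : p ≤ 1) (n : ℕ) : (1 - p) ^ n ≤ exp (-p * n) :=
  calc (1 - p) ^ n ≤ exp (-p) ^ n :=
        pow_le_pow_left₀ (by linarith) (by linarith [add_one_le_exp (-p)]) n
    _ = exp (-p * n) := by rw [← exp_nat_mul, mul_comm]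

lemma exp_neg_mul_sub_one_sub_pow_le {p : ℝ} (hp₀ : 0 ≤ p) (hp₁ : p ≤ 1) (n : ℕ) :
    exp (-p * n) - (1 - p) ^ n ≤ p := by
  have hbase : exp (-p) * (1 - p ^ 2) ≤ 1 - p :=
    calc exp (-p) * (1 - p ^ 2) = exp (-p) * (1 + p) * (1 - p) := by ring
      _ ≤ exp (-p) * exp p * (1 - p) :=
        mul_le_mul_of_nonneg_right
          (mul_le_mul_of_nonneg_left (by linarith [add_one_le_exp p]) (exp_pos _).le)
          (by linarith)
      _ = 1 - p := by rw [← exp_add, neg_add_cancel, exp_zero, one_mul]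
  have hbernoulli : 1 - n * p ^ 2 ≤ (1 - p ^ 2) ^ n := by
    simpa [sub_eq_add_neg] using one_add_mul_le_pow (a := -p ^ 2) (by nlinarith) n
  have hpow : exp (-p * n) * (1 - p ^ 2) ^ n ≤ (1 - p) ^ n := by
    rw [mul_comm (-p), exp_nat_mul, ← mul_pow]
    exact pow_le_pow_left₀ (mul_nonneg (exp_pos _).le (by nlinarith)) hbase n
  calc exp (-p * n) - (1 - p) ^ n ≤ exp (-p * n) - exp (-p * n) * (1 - n * p ^ 2) := by
        nlinarith [exp_pos (-p * n)]
    _ = p * ((p * n) * exp (-(p * n))) := by rw [neg_mul]; ring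
    _ ≤ p := mul_le_of_le_one_right hp₀ (mul_exp_neg_le_one _)

lemma abs_exp_neg_mul_sub_one_sub_pow_le {p : ℝ} (hp₀ : 0 ≤ p) (hp₁ : p ≤ 1) (n : ℕ) :
    |exp (-p * n) - (1 - p) ^ n| ≤ p :=
  abs_le.2 ⟨by linarith [one_sub_pow_le_exp_neg_mul hp₁ n],
    exp_neg_mul_sub_one_sub_pow_le hp₀ hp₁ n⟩

lemma abs_tsum_sub_tsum_le {ι : Type*} {f g c : ι → ℝ} (hg : Summable g) (hc : Summable c)
    (h : ∀ i, |f i - g i| ≤ c i) : |∑' i, f i - ∑' i, g i| ≤ ∑' i, c i := by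
  have hfg : Summable fun i => f i - g i :=
    hc.of_norm_bounded fun i => (Real.norm_eq_abs _).trans_le (h i)
  have hf : Summable f := by simpa using hfg.add hg
  rw [← hf.tsum_sub hg]
  calc |∑' i, (f i - g i)| ≤ ∑' i, |f i - g i| := by
        simpa only [Real.norm_eq_abs] using norm_tsum_le_tsum_norm hfg.norm
    _ ≤ ∑' i, c i := hfg.abs.tsum_le_tsum h hc

section DistinctValues

variable {Ω ι α : Type*} [MeasurableSpace Ω] {μ : Measure Ω} [Fintype ι]

lemma tsum_indicator_range_eq_card_image [DecidableEq α] (f : ι → α) :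
    ∑' a, (Set.range f).indicator (1 : α → ENNReal) a = #(univ.image f) := by
  rw [tsum_eq_sum (s := univ.image f) fun a ha => Set.indicator_of_notMem (by simpa using ha) _,
    card_eq_sum_ones, Nat.cast_sum, Nat.cast_one]
  exact sum_congr rfl fun a ha => Set.indicator_of_mem (Set.mem_range.2 (by simpa using ha)) 1

lemma measureReal_exists_eq_of_iIndepFun [MeasurableSpace α] [MeasurableSingletonClass α]
    [IsProbabilityMeasure μ] {X : ι → Ω → α} (hX : ∀ i, Measurable (X i))
    (hind : iIndepFun X μ) (a : α) :
    μ.real {ω | ∃ i, X i ω = a} = 1 - ∏ i, (1 - μ.real {ω | X i ω = a}) := by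
  have hcompl : {ω | ∃ i, X i ω = a} = (⋂ i ∈ univ, X i ⁻¹' {a}ᶜ)ᶜ := by ext; simp
  rw [hcompl, probReal_compl_eq_one_sub (by measurability), measureReal_def,
    iIndepFun_iff_measure_inter_preimage_eq_mul.1 hind univ
      fun _ _ => (measurableSet_singleton a).compl,
    ENNReal.toReal_prod]
  congr 2 with i
  rw [← measureReal_def, Set.preimage_compl,
    probReal_compl_eq_one_sub (hX i (measurableSet_singleton a))]
  rfl

lemma integral_card_image_eq_tsum [Countable α] [MeasurableSpace α] [MeasurableSingletonClass α]
    [DecidableEq α] [IsFiniteMeasure μ] {X : ι → Ω → α} (hX : ∀ i, Measurable (X i)) :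
    ∫ ω, (#(univ.image fun i => X i ω) : ℝ) ∂μ = ∑' a, μ.real {ω | ∃ i, X i ω = a} := by
  have hmeas : ∀ a, MeasurableSet {ω | ∃ i, X i ω = a} := fun a => by
    rw [Set.ofPred_exists]
    exact .iUnion fun i => hX i (measurableSet_singleton a)
  have hind_meas : ∀ a, Measurable ({ω | ∃ i, X i ω = a}.indicator (1 : Ω → ENNReal)) :=
    fun a => measurable_one.indicator (hmeas a)
  have hcard : (fun ω => (#(univ.image fun i => X i ω) : ENNReal))
      = fun ω => ∑' a, {ω | ∃ i, X i ω = a}.indicator 1 ω := funext fun ω => by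
    rw [← tsum_indicator_range_eq_card_image]
    simp only [Set.indicator_apply, Set.mem_ofPred_eq, Set.mem_range, Pi.one_apply]
  have hlintegral : ∫⁻ ω, (#(univ.image fun i => X i ω) : ENNReal) ∂μ
      = ∑' a, μ {ω | ∃ i, X i ω = a} := by
    rw [hcard, lintegral_tsum fun a => (hind_meas a).aemeasurable]
    exact tsum_congr fun a => lintegral_indicator_one (hmeas a)
  have hintegral := integral_toReal (μ := μ)
    (hcard ▸ (Measurable.tsum hind_meas).aemeasurable)
    (ae_of_all _ fun ω => ENNReal.natCast_lt_top _)
  simp only [ENNReal.toReal_natCast] at hintegral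
  rw [hintegral, hlintegral, ENNReal.tsum_toReal_eq fun a => measure_ne_top μ _]
  rfl

end DistinctValues

/-- the mean of the number of distinct values satisfies
`E[Z_n] = μ(n) + O(1)` with an absolute constant, where `μ(x) = ∑_j (1 − e^{−p_j x})`
and `E[Z_n] = ∑_j (1 − (1 − p_j)^n)`. -/
theorem mean_distinct_values_approx :
    ∃ C : ℝ, 0 < C ∧
      ∀ (Ω : Type) (_ : MeasurableSpace Ω) (μ : Measure Ω), IsProbabilityMeasure μ →
      ∀ (p : ℕ → ℝ), (∀ j, 0 ≤ p j) → (∑' j, p j) = 1 →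
      ∀ (n : ℕ) (X : Fin n → Ω → ℕ), (∀ i, Measurable (X i)) →
      iIndepFun X μ →
      (∀ i j, μ {ω | X i ω = j} = ENNReal.ofReal (p j)) →
      |(∫ ω, ((Finset.univ.image (fun i => X i ω)).card : ℝ) ∂μ)
          - ∑' j, (1 - Real.exp (-(p j) * n))| ≤ C := by
  refine ⟨1, one_pos, fun Ω _ μ _ p hp₀ hp_sum n X hX hind hdist => ?_⟩
  have hp : Summable p := by
    by_contra h
    simp [tsum_eq_zero_of_not_summable h] at hp_sum
  have hp₁ : ∀ j, p j ≤ 1 := fun j => hp_sum ▸ hp.le_tsum j fun k _ => hp₀ k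
  have hmean : ∫ ω, (#(univ.image fun i => X i ω) : ℝ) ∂μ = ∑' j, (1 - (1 - p j) ^ n) := by
    rw [integral_card_image_eq_tsum hX]
    refine tsum_congr fun j => ?_
    simp [measureReal_exists_eq_of_iIndepFun hX hind, measureReal_def, hdist, hp₀ j]
  have hμ_summable : Summable fun j => 1 - exp (-p j * n) :=
    Summable.of_nonneg_of_le (f := fun j => p j * n)
      (fun j => sub_nonneg.2 (exp_le_one_iff.2 (by nlinarith [hp₀ j])))
      (fun j => by rw [neg_mul]; linarith [one_sub_le_exp_neg (p j * n)]) (hp.mul_right (n : ℝ))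
  rw [hmean]
  refine (abs_tsum_sub_tsum_le hμ_summable hp fun j => ?_).trans hp_sum.le
  rw [sub_sub_sub_cancel_left]
  exact abs_exp_neg_mul_sub_one_sub_pow_le (hp₀ j) (hp₁ j) n
end

section
/- There exist absolute constants c > 0 and C > 0 such that for every probability mass function p on ℕ and every x ≥ 0, c·(∑_{j : p_j x ≤ 1} p_j x + ∑_{j : p_j x > 1} e^{−p_j x}) ≤ v(x) ≤ C·(∑_{j : p_j x ≤ 1} p_j x + ∑_{j : p_j x > 1} e^{−p_j x}). -/
open Real

lemma gfun_nonneg {t : ℝ} (ht : 0 ≤ t) :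
    0 ≤ (if t ≤ 1 then t else Real.exp (-t)) := by
  split
  · exact ht
  · exact (Real.exp_pos _).le

lemma gfun_le {t : ℝ} (ht : 0 ≤ t) :
    (if t ≤ 1 then t else Real.exp (-t)) ≤ t := by
  split
  · exact le_rfl
  · next h =>
    push_neg at h
    have : Real.exp (-t) ≤ 1 := Real.exp_le_one_iff.mpr (by linarith)
    linarith

lemma ffun_nonneg {t : ℝ} (ht : 0 ≤ t) :
    0 ≤ Real.exp (-t) * (1 - Real.exp (-t)) := by
  have h1 : Real.exp (-t) ≤ 1 := Real.exp_le_one_iff.mpr (by linarith)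
  have h2 := Real.exp_pos (-t)
  nlinarith

lemma f_le_g {t : ℝ} (ht : 0 ≤ t) :
    Real.exp (-t) * (1 - Real.exp (-t)) ≤ (if t ≤ 1 then t else Real.exp (-t)) := by
  have h1 : Real.exp (-t) ≤ 1 := Real.exp_le_one_iff.mpr (by linarith)
  have h2 := Real.exp_pos (-t)
  have h3 : 1 - t ≤ Real.exp (-t) := by
    have := Real.add_one_le_exp (-t); linarith
  split
  · nlinarith
  · nlinarith

lemma cg_le_f {t : ℝ} (ht : 0 ≤ t) :
    Real.exp (-2) * (if t ≤ 1 then t else Real.exp (-t)) ≤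
      Real.exp (-t) * (1 - Real.exp (-t)) := by
  have h2 := Real.exp_pos (-t)
  split
  · next h =>
    have hm : Real.exp t * Real.exp (-t) = 1 := by
      rw [← Real.exp_add]; simp
    have h4 : 1 + t ≤ Real.exp t := by have := Real.add_one_le_exp t; linarith
    have h5 : Real.exp (-2) ≤ Real.exp (-t) * Real.exp (-t) := by
      rw [← Real.exp_add]
      exact Real.exp_le_exp.mpr (by linarith)
    have h6 := Real.exp_pos t
    nlinarith
  · next h =>
    push_neg at h
    have h5 : Real.exp (-t) ≤ Real.exp (-1) := Real.exp_le_exp.mpr (by linarith)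
    have h6 : Real.exp (-1) < 1/2 := by
      have h7 : (2:ℝ) < Real.exp 1 := by
        have := Real.exp_one_gt_d9; linarith
      have := Real.exp_pos (-1)
      have hm : Real.exp 1 * Real.exp (-1) = 1 := by rw [← Real.exp_add]; simp
      nlinarith
    have h8 : Real.exp (-2) ≤ Real.exp (-1) := Real.exp_le_exp.mpr (by norm_num)
    nlinarith

/-- Lemma 4.1, first part:
`v(x) ≍ ∑_{p_j x ≤ 1} p_j x + ∑_{p_j x > 1} e^{−p_j x}` with absolute constants. -/
theorem v_asymp :
    ∃ c C : ℝ, 0 < c ∧ 0 < C ∧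
      ∀ (p : ℕ → ℝ), (∀ j, 0 ≤ p j) → (∑' j, p j) = 1 →
      ∀ x : ℝ, 0 ≤ x →
        c * (∑' j, if p j * x ≤ 1 then p j * x else Real.exp (-(p j) * x)) ≤ vF p x
        ∧ vF p x ≤ C * (∑' j, if p j * x ≤ 1 then p j * x else Real.exp (-(p j) * x)) := by
  refine ⟨Real.exp (-2), 1, Real.exp_pos _, one_pos, fun p h0 hsum x hx => ?_⟩
  have hp : Summable p := by
    by_contra h
    rw [tsum_eq_zero_of_not_summable h] at hsum
    norm_num at hsum
  have ht : ∀ j, 0 ≤ p j * x := fun j => mul_nonneg (h0 j) hx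
  have hpx : Summable (fun j => p j * x) := hp.mul_right x
  have hg : Summable (fun j => if p j * x ≤ 1 then p j * x else Real.exp (-(p j * x))) :=
    hpx.of_nonneg_of_le (fun j => gfun_nonneg (ht j)) (fun j => gfun_le (ht j))
  have hf : Summable (fun j => Real.exp (-(p j * x)) * (1 - Real.exp (-(p j * x)))) :=
    hpx.of_nonneg_of_le (fun j => ffun_nonneg (ht j))
      (fun j => (f_le_g (ht j)).trans (gfun_le (ht j)))
  have hvF : vF p x = ∑' j, Real.exp (-(p j * x)) * (1 - Real.exp (-(p j * x))) := by
    simp only [vF, neg_mul]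
  have hG : (∑' j, if p j * x ≤ 1 then p j * x else Real.exp (-(p j) * x)) =
      ∑' j, if p j * x ≤ 1 then p j * x else Real.exp (-(p j * x)) := by
    simp only [neg_mul]
  rw [hvF, hG]
  constructor
  · rw [← tsum_mul_left]
    exact Summable.tsum_le_tsum (fun j => cg_le_f (ht j)) (hg.mul_left _) hf
  · rw [one_mul]
    exact Summable.tsum_le_tsum (fun j => f_le_g (ht j)) hf hg
end

section
/- There exist absolute constants c > 0 and C > 0 such that for every probability mass function p on ℕ and every x ≥ 0, c·(∑_{j : p_j x ≤ 1} (p_j x)² + ∑_{j : p_j x > 1} p_j x) ≤ ṽ(x) ≤ C·(∑_{j : p_j x ≤ 1} (p_j x)² + ∑_{j : p_j x > 1} p_j x). -/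
open Real

noncomputable def vtilF (p : ℕ → ℝ) (x : ℝ) : ℝ := x + vF p x - 2 * uF p x

lemma exp_neg_le_quad {t : ℝ} (ht : 0 ≤ t) : exp (-t) ≤ 1 - t + t^2/2 := by
  have h := Real.quadratic_le_exp_of_nonneg ht
  have hpos : (0:ℝ) < 1 + t + t^2/2 := by nlinarith
  have h2 : exp (-t) ≤ 1 / (1 + t + t^2/2) := by
    rw [Real.exp_neg, ← one_div]
    exact one_div_le_one_div_of_le hpos h
  calc exp (-t) ≤ 1 / (1 + t + t^2/2) := h2
    _ ≤ 1 - t + t^2/2 := by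
        rw [div_le_iff₀ hpos]; nlinarith [sq_nonneg t, sq_nonneg (t^2)]

lemma f_upper {t : ℝ} (ht : 0 ≤ t) :
    t + exp (-t) * (1 - exp (-t)) - 2 * (t * exp (-t)) ≤ (if t ≤ 1 then t^2 else t) := by
  set s := exp (-t) with hs
  have hs0 : 0 < s := exp_pos _
  have h1 : 1 - t ≤ s := by have := Real.add_one_le_exp (-t); linarith
  split_ifs with h
  · nlinarith [mul_nonneg hs0.le (sub_nonneg.2 h1), mul_nonneg ht (sub_nonneg.2 h1)]
  · nlinarith [mul_nonneg hs0.le ht]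

lemma f_lower {t : ℝ} (ht : 0 ≤ t) :
    (1/4) * (if t ≤ 1 then t^2 else t) ≤ t + exp (-t) * (1 - exp (-t)) - 2 * (t * exp (-t)) := by
  set s := exp (-t) with hs
  have hs0 : 0 < s := exp_pos _
  have h1 : 1 - t ≤ s := by have := Real.add_one_le_exp (-t); linarith
  split_ifs with h
  · have h2 : s ≤ 1 - t + t^2/2 := exp_neg_le_quad ht
    have hA : t^2/2 - t^4/4 ≤ t + s * (1 - s) - 2 * (t * s) := by
      nlinarith [mul_nonneg (sub_nonneg.2 h2) (by nlinarith : (0:ℝ) ≤ s + (1 - t + t^2/2) + 2*t - 1)]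
    nlinarith [mul_nonneg (sq_nonneg t) (by nlinarith : (0:ℝ) ≤ 1 - t^2)]
  · have ht1 : 1 ≤ t := le_of_not_ge h
    have hse : s ≤ exp (-1) := by
      rw [hs]; exact Real.exp_le_exp.2 (by linarith)
    have he : (2.7:ℝ) < exp 1 := by
      have := Real.exp_one_gt_d9; linarith
    have hs4 : s ≤ 1/2.7 := by
      have h1e : exp (-1) = 1 / exp 1 := by rw [Real.exp_neg, one_div]
      rw [h1e] at hse
      calc s ≤ 1 / exp 1 := hse
        _ ≤ 1/2.7 := one_div_le_one_div_of_le (by norm_num) he.le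
    nlinarith [mul_nonneg hs0.le (sub_nonneg.2 (show s ≤ 1 from by
      rw [hs]; exact Real.exp_le_one_iff.2 (by linarith))),
      mul_le_mul_of_nonneg_left hs4 (by linarith : (0:ℝ) ≤ t)]

/-- Lemma 4.1, second part:
`ṽ(x) ≍ ∑_{p_j x ≤ 1} (p_j x)² + ∑_{p_j x > 1} p_j x` with absolute constants. -/
theorem vtil_asymp :
    ∃ c C : ℝ, 0 < c ∧ 0 < C ∧
      ∀ (p : ℕ → ℝ), (∀ j, 0 ≤ p j) → (∑' j, p j) = 1 →
      ∀ x : ℝ, 0 ≤ x →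
        c * (∑' j, if p j * x ≤ 1 then (p j * x) ^ 2 else p j * x) ≤ vtilF p x
        ∧ vtilF p x ≤ C * (∑' j, if p j * x ≤ 1 then (p j * x) ^ 2 else p j * x) := by
  refine ⟨1/4, 1, by norm_num, by norm_num, fun p hp hsum x hx => ?_⟩
  set T : ℕ → ℝ := fun j => p j * x with hT
  have hTdef : ∀ j, p j * x = T j := fun _ => rfl
  have hT0 : ∀ j, 0 ≤ T j := fun j => mul_nonneg (hp j) hx
  have hpS : Summable p := by
    by_contra hns
    rw [tsum_eq_zero_of_not_summable hns] at hsum; norm_num at hsum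
  have hTS : Summable T := hpS.mul_right x
  set f : ℕ → ℝ := fun j => T j + exp (-T j) * (1 - exp (-T j)) - 2 * (T j * exp (-T j)) with hf
  set g : ℕ → ℝ := fun j => if T j ≤ 1 then (T j)^2 else T j with hg
  have hg0 : ∀ j, 0 ≤ g j := by
    intro j; simp only [hg]; split_ifs
    · exact sq_nonneg _
    · exact hT0 j
  have hgleT : ∀ j, g j ≤ T j := by
    intro j; simp only [hg]; split_ifs with h
    · nlinarith [hT0 j]
    · exact le_refl _
  have hgS : Summable g := Summable.of_nonneg_of_le hg0 hgleT hTS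
  have hflg : ∀ j, f j ≤ g j := fun j => f_upper (hT0 j)
  have hlf : ∀ j, (1/4) * g j ≤ f j := fun j => f_lower (hT0 j)
  have hf0 : ∀ j, 0 ≤ f j := fun j =>
    le_trans (mul_nonneg (by norm_num) (hg0 j)) (hlf j)
  have hfS : Summable f := Summable.of_nonneg_of_le hf0 hflg hgS
  -- summability of the v and u summands
  have h1le : ∀ j, 1 - T j ≤ exp (-T j) := fun j => by
    have := Real.add_one_le_exp (-T j); linarith
  have hexple1 : ∀ j, exp (-T j) ≤ 1 := fun j => Real.exp_le_one_iff.2 (by linarith [hT0 j])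
  have hvsum : Summable (fun j => exp (-T j) * (1 - exp (-T j))) := by
    apply Summable.of_nonneg_of_le (fun j => mul_nonneg (exp_pos _).le (by linarith [hexple1 j]))
      (fun j => ?_) hTS
    nlinarith [exp_pos (-T j), h1le j, hexple1 j, hT0 j]
  have husum : Summable (fun j => T j * exp (-T j)) := by
    apply Summable.of_nonneg_of_le (fun j => mul_nonneg (hT0 j) (exp_pos _).le)
      (fun j => ?_) hTS
    nlinarith [exp_pos (-T j), hexple1 j, hT0 j]
  have hxT : ∑' j, T j = x := by
    rw [hT]; rw [tsum_mul_right, hsum, one_mul]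
  have hvF : vF p x = ∑' j, exp (-T j) * (1 - exp (-T j)) := by
    unfold vF; congr 1; funext j; rw [neg_mul, hTdef]
  have huF : uF p x = ∑' j, T j * exp (-T j) := by
    unfold uF; congr 1; funext j; rw [neg_mul, hTdef]
  have key : vtilF p x = ∑' j, f j := by
    have h1 : ∑' j, f j =
        (∑' j, (T j + exp (-T j) * (1 - exp (-T j)))) - ∑' j, 2 * (T j * exp (-T j)) :=
      Summable.tsum_sub (hTS.add hvsum) (husum.mul_left 2)
    have h2 : ∑' j, (T j + exp (-T j) * (1 - exp (-T j))) = x + vF p x := by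
      rw [Summable.tsum_add hTS hvsum, hxT, hvF]
    have h3 : ∑' j, 2 * (T j * exp (-T j)) = 2 * uF p x := by
      rw [tsum_mul_left, huF]
    unfold vtilF; rw [h1, h2, h3]
  have hgoalg : (∑' j, if p j * x ≤ 1 then (p j * x) ^ 2 else p j * x) = ∑' j, g j := rfl
  rw [hgoalg, key]
  constructor
  · calc (1/4) * ∑' j, g j = ∑' j, (1/4) * g j := (tsum_mul_left).symm
      _ ≤ ∑' j, f j := Summable.tsum_le_tsum hlf (hgS.mul_left _) hfS
  · calc ∑' j, f j ≤ ∑' j, g j := Summable.tsum_le_tsum hflg hfS hgS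
      _ = 1 * ∑' j, g j := (one_mul _).symm
end

section
/- There exists an absolute constant c > 0 such that for every probability mass function p on ℕ and every x ≥ 0, σ²(x) ≥ c·(∑_{j : p_j x ≤ 1} (p_j x)² + ∑_{j : p_j x > 1} e^{−p_j x}). -/
open Real

lemma key_pt (t : ℝ) (ht : 0 ≤ t) :
    Real.exp (-2) / 4 * (if t ≤ 1 then t ^ 2 else Real.exp (-t)) ≤
      Real.exp (-t) * (1 - Real.exp (-t)) - t * (Real.exp (-t) * Real.exp (-t)) := by
  have hE : 0 < Real.exp (-t) := Real.exp_pos _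
  have hid : Real.exp (-t) * Real.exp t = 1 := by
    rw [← Real.exp_add]; simp
  split_ifs with h
  · -- t ≤ 1
    have h14 : 1 + t + t ^ 2 / 4 ≤ Real.exp t := by
      have h1 := Real.add_one_le_exp (t / 2)
      have h2 : Real.exp t = Real.exp (t / 2) * Real.exp (t / 2) := by
        rw [← Real.exp_add]; ring_nf
      nlinarith [Real.exp_pos (t / 2)]
    have hE2 : Real.exp (-2) ≤ Real.exp (-t) * Real.exp (-t) := by
      rw [← Real.exp_add]
      exact Real.exp_le_exp.2 (by linarith)
    nlinarith [sq_nonneg t, mul_pos hE hE,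
      mul_le_mul_of_nonneg_left h14 (le_of_lt (mul_pos hE hE)),
      mul_le_mul_of_nonneg_right hE2 (sq_nonneg t)]
  · -- t > 1
    push_neg at h
    have ht1 : t ≤ Real.exp (t - 1) := by
      have := Real.add_one_le_exp (t - 1); linarith
    have hexp : Real.exp 1 * t ≤ Real.exp t := by
      have : Real.exp t = Real.exp 1 * Real.exp (t - 1) := by
        rw [← Real.exp_add]; ring_nf
      rw [this]
      exact mul_le_mul_of_nonneg_left ht1 (Real.exp_pos 1).le
    -- (1+t) * exp(-t) ≤ 2 / exp 1
    have h2e : (1 + t) * Real.exp (-t) ≤ 2 / Real.exp 1 := by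
      rw [le_div_iff₀ (Real.exp_pos 1)]
      have h1 : (1 + t) * Real.exp 1 ≤ 2 * Real.exp t := by nlinarith [Real.exp_pos 1]
      nlinarith [mul_le_mul_of_nonneg_right h1 hE.le]
    have hnum : Real.exp (-2) / 4 + 2 / Real.exp 1 ≤ 1 := by
      have he1 : (2.7182818283 : ℝ) < Real.exp 1 := Real.exp_one_gt_d9
      have hpos : (0:ℝ) < Real.exp 1 := Real.exp_pos 1
      have he2 : Real.exp (-2) < (Real.exp 1)⁻¹ := by
        rw [← Real.exp_neg]
        exact Real.exp_lt_exp.2 (by norm_num)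
      have hinv : (Real.exp 1)⁻¹ < 0.37 := by
        have h037 : ((0.37:ℝ)⁻¹) < Real.exp 1 := lt_trans (by norm_num) he1
        calc (Real.exp 1)⁻¹ < ((0.37:ℝ)⁻¹)⁻¹ :=
              (inv_lt_inv₀ hpos (by norm_num)).2 h037
          _ = 0.37 := by norm_num
      rw [div_eq_mul_inv 2]
      linarith
    have key : Real.exp (-2) / 4 ≤ 1 - (1 + t) * Real.exp (-t) := by linarith
    calc Real.exp (-2) / 4 * Real.exp (-t)
        ≤ (1 - (1 + t) * Real.exp (-t)) * Real.exp (-t) :=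
          mul_le_mul_of_nonneg_right key hE.le
      _ = Real.exp (-t) * (1 - Real.exp (-t)) - t * (Real.exp (-t) * Real.exp (-t)) := by ring

/-- Lemma 4.2, lower bound: there is an absolute constant `c > 0`
with `σ²(x) ≥ c (∑_{p_j x ≤ 1} (p_j x)² + ∑_{p_j x > 1} e^{−p_j x})`. -/
theorem sigma2_lower :
    ∃ c : ℝ, 0 < c ∧
      ∀ (p : ℕ → ℝ), (∀ j, 0 ≤ p j) → (∑' j, p j) = 1 →
      ∀ x : ℝ, 0 ≤ x →
        c * (∑' j, if p j * x ≤ 1 then (p j * x) ^ 2 else Real.exp (-(p j) * x))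
          ≤ sigma2F p x := by
  refine ⟨Real.exp (-2) / 4, by positivity, ?_⟩
  intro p hp hsum x hx
  have hps : Summable p := by
    by_contra h
    rw [tsum_eq_zero_of_not_summable h] at hsum
    norm_num at hsum
  rcases hx.eq_or_lt with h0 | hxpos
  · -- x = 0
    subst h0
    simp [sigma2F, vF, uF]
  · -- x > 0
    set E : ℕ → ℝ := fun j => Real.exp (-(p j) * x) with hEdef
    have hEpos : ∀ j, 0 < E j := fun j => Real.exp_pos _
    have hE1 : ∀ j, E j ≤ 1 := fun j =>
      Real.exp_le_one_iff.2 (by nlinarith [hp j])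
    have hE1' : ∀ j, 1 - E j ≤ p j * x := by
      intro j
      have := Real.add_one_le_exp (-(p j) * x)
      nlinarith
    have hpx : Summable (fun j => p j * x) := hps.mul_right x
    -- summability facts
    have hSv : Summable (fun j => E j * (1 - E j)) := by
      apply hpx.of_nonneg_of_le
      · intro j; exact mul_nonneg (hEpos j).le (by linarith [hE1 j])
      · intro j
        calc E j * (1 - E j) ≤ 1 * (1 - E j) :=
              mul_le_mul_of_nonneg_right (hE1 j) (by linarith [hE1 j])
          _ = 1 - E j := one_mul _
          _ ≤ p j * x := hE1' j
    have hSA : Summable (fun j => p j * E j) := by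
      apply hps.of_nonneg_of_le
      · intro j; exact mul_nonneg (hp j) (hEpos j).le
      · intro j; exact mul_le_of_le_one_right (hp j) (hE1 j)
    have hSB : Summable (fun j => p j * (E j * E j)) := by
      apply hps.of_nonneg_of_le
      · intro j; exact mul_nonneg (hp j) (mul_nonneg (hEpos j).le (hEpos j).le)
      · intro j
        exact mul_le_of_le_one_right (hp j)
          (by nlinarith [hE1 j, (hEpos j).le])
    have hSd : Summable (fun j => p j * x * (E j * E j)) := by
      simpa [mul_assoc, mul_comm, mul_left_comm] using (hSB.mul_left x)
    have hSif : Summable (fun j => if p j * x ≤ 1 then (p j * x) ^ 2 else Real.exp (-(p j) * x)) := by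
      apply hpx.of_nonneg_of_le
      · intro j
        split_ifs
        · positivity
        · exact (Real.exp_pos _).le
      · intro j
        have hpx0 : 0 ≤ p j * x := mul_nonneg (hp j) hx
        split_ifs with h
        · nlinarith
        · push_neg at h
          calc Real.exp (-(p j) * x) ≤ 1 := hE1 j
            _ ≤ p j * x := h.le
    set A : ℝ := ∑' j, p j * E j with hAdef
    set B : ℝ := ∑' j, p j * (E j * E j) with hBdef
    have hB0 : 0 ≤ B := tsum_nonneg fun j =>
      mul_nonneg (hp j) (mul_nonneg (hEpos j).le (hEpos j).le)
    -- Cauchy–Schwarz: A² ≤ B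
    have hABs : ∀ s : Finset ℕ, (∑ j ∈ s, p j * E j) ^ 2 ≤ B := by
      intro s
      have hcs := Finset.sum_sq_le_sum_mul_sum_of_sq_eq_mul s
        (r := fun j => p j * E j) (f := fun j => p j) (g := fun j => p j * (E j * E j))
        (fun i _ => hp i)
        (fun i _ => mul_nonneg (hp i) (mul_nonneg (hEpos i).le (hEpos i).le))
        (fun i _ => by ring)
      have h1 : ∑ j ∈ s, p j ≤ 1 := by
        rw [← hsum]
        exact Summable.sum_le_tsum s (fun j _ => hp j) hps
      have h2 : ∑ j ∈ s, p j * (E j * E j) ≤ B :=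
        Summable.sum_le_tsum s (fun j _ => mul_nonneg (hp j) (mul_nonneg (hEpos j).le (hEpos j).le)) hSB
      calc (∑ j ∈ s, p j * E j) ^ 2
          ≤ (∑ j ∈ s, p j) * ∑ j ∈ s, p j * (E j * E j) := hcs
        _ ≤ 1 * B := by
            apply mul_le_mul h1 h2
            · exact Finset.sum_nonneg fun j _ =>
                mul_nonneg (hp j) (mul_nonneg (hEpos j).le (hEpos j).le)
            · norm_num
        _ = B := one_mul B
    have hAB : A ^ 2 ≤ B := by
      have hT : Filter.Tendsto (fun s : Finset ℕ => ∑ j ∈ s, p j * E j)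
          Filter.atTop (nhds A) := hSA.hasSum
      exact le_of_tendsto (hT.pow 2) (Filter.Eventually.of_forall hABs)
    -- rewrite uF
    have hu : uF p x = x * A := by
      rw [uF, hAdef, ← tsum_mul_left]
      congr 1; ext j; ring
    have h3 : (uF p x) ^ 2 / x ≤ x * B := by
      rw [hu]
      have heq : (x * A) ^ 2 / x = x * A ^ 2 := by
        field_simp
      rw [heq]
      exact mul_le_mul_of_nonneg_left hAB hx
    have hxB : x * B = ∑' j, p j * x * (E j * E j) := by
      rw [hBdef, ← tsum_mul_left]
      congr 1; ext j; ring
    have h4 : vF p x - x * B = ∑' j, (E j * (1 - E j) - p j * x * (E j * E j)) := by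
      rw [hxB, vF]
      exact (Summable.tsum_sub hSv hSd).symm
    have h5 : ∀ j, Real.exp (-2) / 4 *
        (if p j * x ≤ 1 then (p j * x) ^ 2 else Real.exp (-(p j) * x)) ≤
        E j * (1 - E j) - p j * x * (E j * E j) := by
      intro j
      have hk := key_pt (p j * x) (mul_nonneg (hp j) hx)
      simpa [hEdef, neg_mul] using hk
    calc Real.exp (-2) / 4 *
        (∑' j, if p j * x ≤ 1 then (p j * x) ^ 2 else Real.exp (-(p j) * x))
        = ∑' j, Real.exp (-2) / 4 *
            (if p j * x ≤ 1 then (p j * x) ^ 2 else Real.exp (-(p j) * x)) :=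
          (tsum_mul_left).symm
      _ ≤ ∑' j, (E j * (1 - E j) - p j * x * (E j * E j)) :=
          Summable.tsum_le_tsum h5 (hSif.mul_left _) (hSv.sub hSd)
      _ = vF p x - x * B := h4.symm
      _ ≤ vF p x - (uF p x) ^ 2 / x := by linarith
      _ = sigma2F p x := rfl
end

section
/- There exist absolute constants c > 0 and C > 0 such that for every probability mass function p on ℕ and every x ≥ 0 satisfying ∑_{j : p_j x ≤ 1} p_j ≥ 1/2, one has c·ṽ(x) ≤ σ²(x) ≤ C·ṽ(x). -/
open Real

set_option maxHeartbeats 2000000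


lemma exp_neg_taylor {a : ℝ} (h0 : 0 ≤ a) (h1 : a ≤ 1) :
    |Real.exp (-a) - (1 - a + a^2/2 - a^3/6)| ≤ 5 * a^4 / 96 := by
  have h := Real.exp_bound (x := -a) (by rwa [abs_neg, abs_of_nonneg h0]) (n := 4) (by norm_num)
  have hs : ∑ m ∈ Finset.range 4, (-a) ^ m / (Nat.factorial m) = 1 - a + a^2/2 - a^3/6 := by
    simp [Finset.sum_range_succ, Nat.factorial]
    ring
  rw [hs, abs_neg, abs_of_nonneg h0] at h
  calc |Real.exp (-a) - (1 - a + a^2/2 - a^3/6)| ≤ a ^ 4 * ((4:ℕ).succ / ((Nat.factorial 4) * 4)) := h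
    _ = 5 * a^4 / 96 := by norm_num [Nat.factorial]; ring

lemma Rlo {a : ℝ} (h0 : 0 ≤ a) (h1 : a ≤ 1) :
    0 ≤ 5/2 - 31/6*a + 481/96*a^2 - 8/3*a^3 + 143/288*a^4 + 17/288*a^5
      - 1085/9216*a^6 - 25/1536*a^7 := by
  nlinarith [sq_nonneg (a-1), sq_nonneg (a*(1-a)), sq_nonneg (a^2*(1-a)), sq_nonneg (a^3*(1-a)),
    pow_le_one₀ h0 h1 (n:=4), pow_le_one₀ h0 h1 (n:=6), mul_nonneg h0 h0, sq_nonneg a,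
    pow_nonneg h0 4, pow_nonneg h0 5, pow_nonneg h0 6, pow_nonneg h0 7, sq_nonneg (a - 31/60)]

lemma Rhi {a : ℝ} (h0 : 0 ≤ a) (h1 : a ≤ 1) :
    0 ≤ 5/2 - 31/6*a + 431/96*a^2 - 8/3*a^3 + 353/288*a^4 - 113/288*a^5
      + 835/9216*a^6 - 25/1536*a^7 := by
  nlinarith [sq_nonneg (a-1), sq_nonneg (a*(1-a)), sq_nonneg (a^2*(1-a)), sq_nonneg (a^3*(1-a)),
    pow_le_one₀ h0 h1 (n:=4), pow_le_one₀ h0 h1 (n:=6), mul_nonneg h0 h0, sq_nonneg a,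
    pow_nonneg h0 4, pow_nonneg h0 5, pow_nonneg h0 6, pow_nonneg h0 7, sq_nonneg (a - 31/60)]

/-- key small-`a` comparison: `g(a) ≤ 6 φ(a)` on `[0,1]`. -/
lemma lemA {a : ℝ} (h0 : 0 ≤ a) (h1 : a ≤ 1) :
    a + Real.exp (-a) * (1 - Real.exp (-a)) - 2 * (a * Real.exp (-a))
      ≤ 6 * (Real.exp (-a) * (1 - Real.exp (-a)) - a * Real.exp (-a) ^ 2) := by
  rcases eq_or_lt_of_le h0 with h | ha
  · rw [← h]; simp
  set y := Real.exp (-a) with hy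
  set l : ℝ := 1 - a + a^2/2 - a^3/6 - 5*a^4/96 with hldef
  set h : ℝ := 1 - a + a^2/2 - a^3/6 + 5*a^4/96 with hhdef
  have hb := exp_neg_taylor h0 h1
  rw [abs_le] at hb
  have hl : 0 ≤ y - l := by simp only [hldef]; linarith [hb.1]
  have hh : 0 ≤ h - y := by simp only [hhdef]; linarith [hb.2]
  have hPl : 0 ≤ -(5+6*a)*l^2 + (5+2*a)*l - a := by
    have key : -(5+6*a)*l^2 + (5+2*a)*l - a
        = a^2 * (5/2 - 31/6*a + 481/96*a^2 - 8/3*a^3 + 143/288*a^4 + 17/288*a^5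
          - 1085/9216*a^6 - 25/1536*a^7) := by rw [hldef]; ring
    rw [key]; exact mul_nonneg (sq_nonneg a) (Rlo h0 h1)
  have hPh : 0 ≤ -(5+6*a)*h^2 + (5+2*a)*h - a := by
    have key : -(5+6*a)*h^2 + (5+2*a)*h - a
        = a^2 * (5/2 - 31/6*a + 431/96*a^2 - 8/3*a^3 + 353/288*a^4 - 113/288*a^5
          + 835/9216*a^6 - 25/1536*a^7) := by rw [hhdef]; ring
    rw [key]; exact mul_nonneg (sq_nonneg a) (Rhi h0 h1)
  have hd : (0:ℝ) < h - l := by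
    simp only [hldef, hhdef]
    have : 0 < a^4 := by positivity
    nlinarith
  have idty : (h - l) * (-(5+6*a)*y^2 + (5+2*a)*y - a)
      = (h - y) * (-(5+6*a)*l^2 + (5+2*a)*l - a)
      + (y - l) * (-(5+6*a)*h^2 + (5+2*a)*h - a)
      + (5+6*a) * ((h - l) * ((y - l) * (h - y))) := by ring
  have hprod : 0 ≤ (h - l) * (-(5+6*a)*y^2 + (5+2*a)*y - a) := by
    rw [idty]
    have t1 := mul_nonneg hh hPl
    have t2 := mul_nonneg hl hPh
    have t3 : 0 ≤ (5+6*a) * ((h - l) * ((y - l) * (h - y))) :=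
      mul_nonneg (by linarith) (mul_nonneg hd.le (mul_nonneg hl hh))
    linarith
  have hP : 0 ≤ -(5+6*a)*y^2 + (5+2*a)*y - a := by
    by_contra hc
    push_neg at hc
    nlinarith [mul_pos hd (neg_pos.mpr hc)]
  nlinarith [hP]

/-- large-`a` bound: `(3/2) a e^{-2a} ≤ e^{-a}(1-e^{-a})` for `a ≥ 1`. -/
lemma lemB {a : ℝ} (h1 : 1 ≤ a) :
    (3/2) * (a * Real.exp (-a) ^ 2) ≤ Real.exp (-a) * (1 - Real.exp (-a)) := by
  set y := Real.exp (-a) with hy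
  have hyE : y * Real.exp a = 1 := by
    rw [hy, ← Real.exp_add]; simp
  have hEeq : Real.exp a = Real.exp 1 * Real.exp (a - 1) := by
    rw [← Real.exp_add]; ring_nf
  have hstep : Real.exp 1 * a ≤ Real.exp a := by
    rw [hEeq]
    exact mul_le_mul_of_nonneg_left (by linarith [Real.add_one_le_exp (a-1)]) (Real.exp_pos 1).le
  have h27 : (27/10) * a ≤ Real.exp 1 * a :=
    mul_le_mul_of_nonneg_right (by linarith [Real.exp_one_gt_d9]) (by linarith)
  have hE' : (27/10) * a ≤ Real.exp a := le_trans h27 hstep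
  have hy2E : y^2 * Real.exp a = y := by
    rw [pow_two, mul_assoc, hyE, mul_one]
  nlinarith [mul_nonneg (sq_nonneg y) (sub_nonneg.mpr hE'),
    mul_nonneg (sub_nonneg.mpr h1) (sq_nonneg y), hy2E]

/-- `φ(a) ≥ 0` for all `a ≥ 0`. -/
lemma lem_phi {a : ℝ} (h0 : 0 ≤ a) :
    a * Real.exp (-a) ^ 2 ≤ Real.exp (-a) * (1 - Real.exp (-a)) := by
  set y := Real.exp (-a) with hy
  have hyE : y * Real.exp a = 1 := by rw [hy, ← Real.exp_add]; simp
  have hy2E : y^2 * Real.exp a = y := by rw [pow_two, mul_assoc, hyE, mul_one]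
  nlinarith [mul_nonneg (sq_nonneg y) (sub_nonneg.mpr (Real.add_one_le_exp a)), hy2E]

lemma lem_one_sub {a : ℝ} : 1 - Real.exp (-a) ≤ a := by
  linarith [Real.add_one_le_exp (-a)]

lemma lem_y2_eighth {a : ℝ} (h0 : 0 ≤ a) (h1 : a ≤ 1) :
    (1:ℝ)/8 ≤ Real.exp (-a) ^ 2 := by
  set y := Real.exp (-a) with hy
  have hyE : y * Real.exp a = 1 := by rw [hy, ← Real.exp_add]; simp
  have hEle : Real.exp a ≤ 2.7182818286 :=
    le_trans (Real.exp_le_exp.mpr h1) Real.exp_one_lt_d9.le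
  have hypos : 0 < y := Real.exp_pos _
  have hylb : (1:ℝ)/2.7182818286 ≤ y := by
    rw [div_le_iff₀ (by norm_num)]
    nlinarith [mul_le_mul_of_nonneg_left hEle hypos.le]
  nlinarith [hylb]

/-- Proposition 4.3(i): if `∑_{p_j x ≤ 1} p_j ≥ 1/2` then
`σ²(x) ≍ ṽ(x)` with absolute constants. -/
theorem sigma2_asymp_vtil :
    ∃ c C : ℝ, 0 < c ∧ 0 < C ∧
      ∀ (p : ℕ → ℝ), (∀ j, 0 ≤ p j) → (∑' j, p j) = 1 →
      ∀ x : ℝ, 0 ≤ x →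
        (1 / 2 : ℝ) ≤ (∑' j, if p j * x ≤ 1 then p j else 0) →
        c * vtilF p x ≤ sigma2F p x ∧ sigma2F p x ≤ C * vtilF p x := by
  refine ⟨1/96, 1, by norm_num, by norm_num, ?_⟩
  intro p hp hsum x hx hhalf
  have hS : Summable p := by
    by_contra h
    rw [tsum_eq_zero_of_not_summable h] at hsum
    norm_num at hsum
  rcases eq_or_lt_of_le hx with hx0 | hxpos
  · have hx0' : x = 0 := hx0.symm
    subst hx0'
    have hv : vF p 0 = 0 := by simp [vF]
    have hu : uF p 0 = 0 := by simp [uF]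
    constructor <;> simp [sigma2F, vtilF, hv, hu]
  -- main case x > 0
  set y : ℕ → ℝ := fun j => Real.exp (-(p j * x)) with hydef
  set f : ℕ → ℝ := fun j => y j * (1 - y j) with hfdef
  set hE : ℕ → ℝ := fun j => p j * x * y j with hEdef
  set w : ℕ → ℝ := fun j => if p j * x ≤ 1 then p j * x else (2/3) * (p j * x) with hwdef
  set r : ℕ → ℝ := fun j => if p j * x ≤ 1 then p j * x * y j ^ 2
      else (3/2) * (p j * x * y j ^ 2) with hrdef
  set ph : ℕ → ℝ := fun j => if p j * x ≤ 1 then y j * (1 - y j) - p j * x * y j ^ 2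
      else 0 with hphdef
  set tt : ℕ → ℝ := fun j => if p j * x ≤ 1 then 0 else p j * x with httdef
  set ss : ℕ → ℝ := fun j => if p j * x ≤ 1 then p j * x else 0 with hssdef
  have hax : ∀ j, 0 ≤ p j * x := fun j => mul_nonneg (hp j) hx
  have hy0 : ∀ j, 0 < y j := fun j => Real.exp_pos _
  have hy1 : ∀ j, y j ≤ 1 := fun j =>
    Real.exp_le_one_iff.mpr (neg_nonpos_of_nonneg (hax j))
  have h1my : ∀ j, 1 - y j ≤ p j * x := fun j => lem_one_sub
  -- pointwise bounds
  have hf0 : ∀ j, 0 ≤ f j := fun j => mul_nonneg (hy0 j).le (by linarith [hy1 j])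
  have hfa : ∀ j, f j ≤ p j * x := by
    intro j
    have h1 := h1my j; have h2 := hy0 j; have h3 := hy1 j
    simp only [hfdef]
    nlinarith [sq_nonneg (1 - y j)]
  have hE0 : ∀ j, 0 ≤ hE j := fun j => mul_nonneg (hax j) (hy0 j).le
  have hEa : ∀ j, hE j ≤ p j * x := by
    intro j
    simp only [hEdef]
    nlinarith [hax j, hy1 j, hy0 j]
  have hw0 : ∀ j, 0 ≤ w j := by
    intro j; simp only [hwdef]; split_ifs
    · exact hax j
    · nlinarith [hax j]
  have hwa : ∀ j, w j ≤ p j * x := by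
    intro j; simp only [hwdef]; split_ifs <;> nlinarith [hax j]
  have hwlb : ∀ j, (2/3) * (p j * x) ≤ w j := by
    intro j; simp only [hwdef]; split_ifs <;> nlinarith [hax j]
  have hr0 : ∀ j, 0 ≤ r j := by
    intro j; simp only [hrdef]
    have := mul_nonneg (hax j) (sq_nonneg (y j))
    split_ifs
    · exact this
    · nlinarith
  have hra : ∀ j, r j ≤ (3/2) * (p j * x) := by
    intro j; simp only [hrdef]
    have h2 := hy0 j; have h3 := hy1 j; have h4 := hax j
    have hy2 : (0:ℝ) ≤ 1 - y j^2 := by nlinarith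
    split_ifs <;> nlinarith [mul_nonneg h4 hy2]
  have hw2 : ∀ j, hE j ^ 2 = w j * r j := by
    intro j; simp only [hEdef, hwdef, hrdef]; split_ifs <;> ring
  have haw : ∀ j, p j * x - w j = (1/3) * tt j := by
    intro j; simp only [hwdef, httdef]; split_ifs <;> ring
  have hrS : ∀ j, (1/8) * ss j ≤ r j := by
    intro j; simp only [hrdef, hssdef]
    split_ifs with hc
    · have := lem_y2_eighth (hax j) hc
      nlinarith [hax j]
    · have := mul_nonneg (hax j) (sq_nonneg (y j))
      nlinarith
  have hph0 : ∀ j, 0 ≤ ph j := by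
    intro j; simp only [hphdef]
    split_ifs
    · linarith [lem_phi (hax j)]
    · exact le_rfl
  have hpha : ∀ j, ph j ≤ p j * x := by
    intro j; simp only [hphdef]
    split_ifs
    · have := hfa j
      simp only [hfdef] at this
      nlinarith [mul_nonneg (hax j) (sq_nonneg (y j))]
    · exact hax j
  have hfr : ∀ j, ph j ≤ f j - r j := by
    intro j; simp only [hphdef, hfdef, hrdef]
    split_ifs with hc
    · linarith
    · have h1 : (1:ℝ) ≤ p j * x := by linarith [not_le.mp hc]
      linarith [lemB h1]
  have htt0 : ∀ j, 0 ≤ tt j := by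
    intro j; simp only [httdef]; split_ifs
    · exact le_rfl
    · exact hax j
  have htta : ∀ j, tt j ≤ p j * x := by
    intro j; simp only [httdef]; split_ifs
    · exact hax j
    · exact le_rfl
  have hss0 : ∀ j, 0 ≤ ss j := by
    intro j; simp only [hssdef]; split_ifs
    · exact hax j
    · exact le_rfl
  have hssa : ∀ j, ss j ≤ p j * x := by
    intro j; simp only [hssdef]; split_ifs
    · exact le_rfl
    · exact hax j
  have hg : ∀ j, p j * x + f j - 2 * hE j ≤ 6 * ph j + 2 * tt j := by
    intro j; simp only [hfdef, hEdef, hphdef, httdef]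
    split_ifs with hc
    · have := lemA (hax j) hc
      linarith
    · have h1 : (1:ℝ) ≤ p j * x := by linarith [not_le.mp hc]
      have h2 := hy0 j
      nlinarith [sq_nonneg (1 - 2 * y j)]
  -- summability
  have hsa : Summable (fun j => p j * x) := hS.mul_right x
  have hsumax : ∑' j, p j * x = x := by rw [tsum_mul_right, hsum, one_mul]
  have sf : Summable f := Summable.of_nonneg_of_le hf0 hfa hsa
  have sh : Summable hE := Summable.of_nonneg_of_le hE0 hEa hsa
  have sw : Summable w := Summable.of_nonneg_of_le hw0 hwa hsa
  have sr : Summable r := Summable.of_nonneg_of_le hr0 hra (hsa.mul_left (3/2))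
  have sph : Summable ph := Summable.of_nonneg_of_le hph0 hpha hsa
  have stt : Summable tt := Summable.of_nonneg_of_le htt0 htta hsa
  have sss : Summable ss := Summable.of_nonneg_of_le hss0 hssa hsa
  -- identify vF, uF
  have hvf : vF p x = ∑' j, f j := by
    simp only [vF, hfdef, hydef, neg_mul]
  have huf : uF p x = ∑' j, hE j := by
    simp only [uF, hEdef, hydef, neg_mul]
  -- half-mass condition
  have hSx : x/2 ≤ ∑' j, ss j := by
    have e : ∑' j, ss j = (∑' j, if p j * x ≤ 1 then p j else 0) * x := by
      rw [← tsum_mul_right]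
      apply tsum_congr; intro j
      simp only [hssdef]; split_ifs <;> ring
    rw [e]
    nlinarith [mul_le_mul_of_nonneg_right hhalf hx]
  -- scalar facts
  have hW0 : (2/3) * x ≤ ∑' j, w j := by
    calc (2/3) * x = ∑' j, (2/3) * (p j * x) := by rw [tsum_mul_left, hsumax]
      _ ≤ ∑' j, w j := Summable.tsum_le_tsum hwlb (hsa.mul_left _) sw
  have hWpos : 0 < ∑' j, w j := lt_of_lt_of_le (by positivity) hW0
  have hxW : x - ∑' j, w j = (1/3) * ∑' j, tt j := by
    have e1 : ∑' j, (p j * x - w j) = x - ∑' j, w j := by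
      rw [Summable.tsum_sub hsa sw, hsumax]
    have e2 : ∑' j, (p j * x - w j) = (1/3) * ∑' j, tt j := by
      rw [← tsum_mul_left]; exact tsum_congr haw
    linarith
  have hQlb : x/16 ≤ ∑' j, r j := by
    have h8 : (1/8) * ∑' j, ss j ≤ ∑' j, r j := by
      rw [← tsum_mul_left]
      exact Summable.tsum_le_tsum hrS (sss.mul_left _) sr
    linarith
  have hQ0 : 0 ≤ ∑' j, r j := tsum_nonneg hr0
  have hPhi0 : 0 ≤ ∑' j, ph j := tsum_nonneg hph0
  have hT0 : 0 ≤ ∑' j, tt j := tsum_nonneg htt0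
  have hVQ : ∑' j, ph j ≤ (∑' j, f j) - ∑' j, r j := by
    rw [← Summable.tsum_sub sf sr]
    exact Summable.tsum_le_tsum hfr sph (sf.sub sr)
  -- Cauchy-Schwarz : U² ≤ W Q
  set U := ∑' j, hE j with hUdef
  set W := ∑' j, w j with hWdef2
  set Q := ∑' j, r j with hQdef2
  set t0 : ℝ := U / W with ht0def
  have hq0 : ∀ j, 0 ≤ t0^2 * w j - 2*t0*hE j + r j := by
    intro j
    rcases eq_or_lt_of_le (hax j) with h | h
    · have hwj : w j = 0 := by simp only [hwdef]; rw [← h]; norm_num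
      have hEj : hE j = 0 := by simp only [hEdef]; rw [← h]; ring
      have hrj : r j = 0 := by simp only [hrdef]; rw [← h]; norm_num
      rw [hwj, hEj, hrj]; norm_num
    · have hwpos : 0 < w j := by
        simp only [hwdef]; split_ifs
        · exact h
        · nlinarith
      have key : 0 ≤ w j * (t0^2 * w j - 2*t0*hE j + r j) := by
        nlinarith [sq_nonneg (w j * t0 - hE j), hw2 j]
      by_contra hc
      push_neg at hc
      nlinarith [mul_pos hwpos (neg_pos.mpr hc)]
  have htsum : ∑' j, (t0^2 * w j - 2*t0*hE j + r j) = t0^2 * W - 2*t0*U + Q := by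
    rw [Summable.tsum_add ((sw.mul_left (t0^2)).sub (sh.mul_left (2*t0))) sr,
      Summable.tsum_sub (sw.mul_left (t0^2)) (sh.mul_left (2*t0)), tsum_mul_left, tsum_mul_left]
  have hpos : 0 ≤ t0^2*W - 2*t0*U + Q := htsum ▸ tsum_nonneg hq0
  have hu2 : U^2 ≤ W * Q := by
    have e : t0^2*W - 2*t0*U + Q = Q - U^2/W := by
      rw [ht0def]; field_simp; ring
    rw [e] at hpos
    have h1 : U^2/W ≤ Q := by linarith
    calc U^2 = (U^2/W)*W := by field_simp
      _ ≤ Q*W := mul_le_mul_of_nonneg_right h1 hWpos.le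
      _ = W*Q := mul_comm _ _
  -- lower bound
  have hkey : x * (∑' j, ph j) + x * ((∑' j, tt j)/48) ≤ x * (∑' j, f j) - W*Q := by
    have e1 : Q * (x - W) = Q * (∑' j, tt j) / 3 := by rw [hxW]; ring
    nlinarith [mul_nonneg hxpos.le (sub_nonneg.mpr hVQ),
      mul_nonneg hT0 (sub_nonneg.mpr hQlb), e1]
  have hlow : (∑' j, ph j) + (∑' j, tt j)/48 ≤ sigma2F p x := by
    have hsig : sigma2F p x = (∑' j, f j) - U^2/x := by
      simp only [sigma2F, hvf, huf, hUdef]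
    rw [hsig]
    have h1 : U^2/x ≤ (W*Q)/x := by
      exact div_le_div_of_nonneg_right hu2 hxpos.le
    have h3 : (W*Q)/x ≤ (∑' j, f j) - ((∑' j, ph j) + (∑' j, tt j)/48) := by
      rw [div_le_iff₀ hxpos]
      nlinarith [hkey]
    linarith
  -- upper bound for vtil
  have hvtle : vtilF p x ≤ 6 * (∑' j, ph j) + 2 * (∑' j, tt j) := by
    have e2 : vtilF p x = ∑' j, (p j * x + f j - 2 * hE j) := by
      simp only [vtilF]
      rw [hvf, huf, Summable.tsum_sub (hsa.add sf) (sh.mul_left 2), Summable.tsum_add hsa sf,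
        tsum_mul_left, hsumax]
    have e3 : 6 * (∑' j, ph j) + 2 * (∑' j, tt j) = ∑' j, (6 * ph j + 2 * tt j) := by
      rw [Summable.tsum_add (sph.mul_left 6) (stt.mul_left 2), tsum_mul_left, tsum_mul_left]
    rw [e2, e3]
    exact Summable.tsum_le_tsum hg ((hsa.add sf).sub (sh.mul_left 2))
      ((sph.mul_left 6).add (stt.mul_left 2))
  constructor
  · linarith [hvtle, hlow, hPhi0, hT0]
  · -- sigma2 ≤ vtil
    have hid : x - 2*(uF p x) + (uF p x)^2/x = (x - uF p x)^2/x := by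
      field_simp; ring
    have hnn : 0 ≤ (x - uF p x)^2/x := by positivity
    simp only [sigma2F, vtilF, one_mul]
    linarith [hid, hnn]
end

section
/- There exists an absolute constant c > 0 such that for every probability mass function p on ℕ and every x ≥ 0 satisfying ∑_{j : p_j x > 1} p_j ≥ 1/2, one has c·v(x) ≤ σ²(x) ≤ v(x). -/
open Real

lemma aux1 (t : ℝ) : t * Real.exp (-t) ≤ 1 - Real.exp (-t) := by
  have h := Real.add_one_le_exp t
  have h2 : Real.exp (-t) * Real.exp t = 1 := by rw [← Real.exp_add]; simp
  nlinarith [Real.exp_pos (-t), Real.exp_pos t]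

lemma aux2 (t : ℝ) (ht : 1 ≤ t) :
    (Real.exp 1 - 1) * (t * Real.exp (-t)) ≤ 1 - Real.exp (-t) := by
  have h1 := Real.add_one_le_exp (t - 1)
  have h3 : Real.exp (t - 1) * Real.exp 1 = Real.exp t := by
    rw [← Real.exp_add]; ring_nf
  have h2 : Real.exp (-t) * Real.exp t = 1 := by rw [← Real.exp_add]; simp
  -- from h1 : t ≤ exp (t-1), so exp 1 * t ≤ exp t
  have h4 : Real.exp 1 * t ≤ Real.exp t := by nlinarith [Real.exp_pos 1]
  -- goal ⟺ (e-1) t ≤ exp t - 1 after multiplying by exp t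
  nlinarith [Real.exp_pos (-t), Real.exp_pos t, Real.exp_pos 1, Real.one_le_exp (zero_le_one)]

/-- Proposition 4.3(ii): if `∑_{p_j x > 1} p_j ≥ 1/2` then
`c·v(x) ≤ σ²(x) ≤ v(x)` with an absolute constant `c > 0`. -/
theorem sigma2_asymp_v :
    ∃ c : ℝ, 0 < c ∧
      ∀ (p : ℕ → ℝ), (∀ j, 0 ≤ p j) → (∑' j, p j) = 1 →
      ∀ x : ℝ, 0 ≤ x →
        (1 / 2 : ℝ) ≤ (∑' j, if 1 < p j * x then p j else 0) →
        c * vF p x ≤ sigma2F p x ∧ sigma2F p x ≤ vF p x := by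
  refine ⟨1/5, by norm_num, ?_⟩
  intro p hp hps x hx hhalf
  -- x must be positive
  have hxpos : 0 < x := by
    rcases hx.lt_or_eq with h | h
    · exact h
    · exfalso
      have : (∑' j, if 1 < p j * x then p j else 0) = 0 := by
        have : ∀ j, (if 1 < p j * x then p j else 0) = 0 := by
          intro j; rw [← h]; simp
        simp [this]
      rw [this] at hhalf; norm_num at hhalf
  have hsump : Summable p := by
    by_contra h
    rw [tsum_eq_zero_of_not_summable h] at hps
    norm_num at hps
  have ht0 : ∀ j, 0 ≤ p j * x := fun j => mul_nonneg (hp j) hx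
  have hexple : ∀ j, Real.exp (-(p j) * x) ≤ 1 := by
    intro j
    rw [show (-(p j) * x) = -(p j * x) by ring]
    calc Real.exp (-(p j * x)) ≤ Real.exp 0 := Real.exp_le_exp.mpr (by linarith [ht0 j])
      _ = 1 := Real.exp_zero
  have hvterm_nonneg : ∀ j, 0 ≤ Real.exp (-(p j) * x) * (1 - Real.exp (-(p j) * x)) :=
    fun j => mul_nonneg (Real.exp_pos _).le (by linarith [hexple j])
  have hvterm_le : ∀ j, Real.exp (-(p j) * x) * (1 - Real.exp (-(p j) * x)) ≤ p j * x := by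
    intro j
    have h1 : 1 - Real.exp (-(p j * x)) ≤ p j * x := by
      have := Real.add_one_le_exp (-(p j * x)); linarith
    calc Real.exp (-(p j) * x) * (1 - Real.exp (-(p j) * x))
        ≤ 1 * (1 - Real.exp (-(p j) * x)) := by
          apply mul_le_mul_of_nonneg_right (hexple j) (by linarith [hexple j])
      _ = 1 - Real.exp (-(p j * x)) := by rw [show (-(p j) * x) = -(p j * x) by ring]; ring
      _ ≤ p j * x := h1
  have hsumt : Summable (fun j => p j * x) := hsump.mul_right x
  have hvsum : Summable (fun j => Real.exp (-(p j) * x) * (1 - Real.exp (-(p j) * x))) :=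
    Summable.of_nonneg_of_le hvterm_nonneg hvterm_le hsumt
  have huterm_nonneg : ∀ j, 0 ≤ p j * x * Real.exp (-(p j) * x) :=
    fun j => mul_nonneg (ht0 j) (Real.exp_pos _).le
  have husum : Summable (fun j => p j * x * Real.exp (-(p j) * x)) :=
    Summable.of_nonneg_of_le huterm_nonneg
      (fun j => mul_le_of_le_one_right (ht0 j) (hexple j)) hsumt
  -- the Cauchy–Schwarz weight
  set G : ℕ → ℝ := fun j =>
    (p j * x)^2 * Real.exp (-(p j * x)) / (1 - Real.exp (-(p j * x))) with hGdef
  have hG_nonneg : ∀ j, 0 ≤ G j := by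
    intro j
    apply div_nonneg (mul_nonneg (sq_nonneg _) (Real.exp_pos _).le)
    have := hexple j
    rw [show (-(p j) * x) = -(p j * x) by ring] at this
    linarith
  -- pointwise bound on G
  set D : ℕ → ℝ := fun j => p j * x - (2/5) * (if 1 < p j * x then p j * x else 0) with hDdef
  have hE : (2.7182818283 : ℝ) < Real.exp 1 := Real.exp_one_gt_d9
  have hGD : ∀ j, G j ≤ D j := by
    intro j
    rcases (ht0 j).eq_or_lt with h0 | h0
    · simp only [hGdef, hDdef, ← h0]
      norm_num
    · have hlt : Real.exp (-(p j * x)) < 1 := by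
        calc Real.exp (-(p j * x)) < Real.exp 0 := Real.exp_lt_exp.mpr (by linarith)
          _ = 1 := Real.exp_zero
      have hpos : 0 < 1 - Real.exp (-(p j * x)) := by linarith
      by_cases hbig : 1 < p j * x
      · simp only [hGdef, hDdef, if_pos hbig]
        rw [div_le_iff₀ hpos]
        have := aux2 (p j * x) hbig.le
        have hmul := mul_le_mul_of_nonneg_left this h0.le
        have hS : 0 ≤ (p j * x)^2 * Real.exp (-(p j * x)) :=
          mul_nonneg (sq_nonneg _) (Real.exp_pos _).le
        nlinarith [Real.exp_pos (-(p j * x))]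
      · simp only [hGdef, hDdef, if_neg hbig]
        rw [div_le_iff₀ hpos]
        have := aux1 (p j * x)
        nlinarith [Real.exp_pos (-(p j * x))]
  have hD_le : ∀ j, D j ≤ p j * x := by
    intro j; simp only [hDdef]
    split <;> nlinarith [ht0 j]
  have hindsum : Summable (fun j => if 1 < p j * x then p j * x else 0) :=
    Summable.of_nonneg_of_le (fun j => by split <;> simp [ht0 j])
      (fun j => by split <;> simp [ht0 j]) hsumt
  have hDsum : Summable D := by
    simpa only [hDdef] using hsumt.sub (hindsum.mul_left (2/5))
  have hGsum : Summable G :=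
    Summable.of_nonneg_of_le hG_nonneg (fun j => (hGD j).trans (hD_le j))
      hsumt
  -- Cauchy–Schwarz : uF ≤ sqrt (vF * ∑' G)
  have hv_nonneg : 0 ≤ vF p x := tsum_nonneg hvterm_nonneg
  have hGsum_nonneg : 0 ≤ ∑' j, G j := tsum_nonneg hG_nonneg
  have hterm_eq : ∀ j, Real.sqrt (Real.exp (-(p j) * x) * (1 - Real.exp (-(p j) * x)))
      * Real.sqrt (G j) = p j * x * Real.exp (-(p j) * x) := by
    intro j
    rw [← Real.sqrt_mul (hvterm_nonneg j)]
    rcases (ht0 j).eq_or_lt with h0 | h0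
    · simp only [hGdef, ← h0]
      norm_num
    · have hlt : Real.exp (-(p j * x)) < 1 := by
        calc Real.exp (-(p j * x)) < Real.exp 0 := Real.exp_lt_exp.mpr (by linarith)
          _ = 1 := Real.exp_zero
      have hpos : (1 - Real.exp (-(p j * x))) ≠ 0 := by linarith
      have heq : Real.exp (-(p j) * x) * (1 - Real.exp (-(p j) * x)) * G j
          = (p j * x * Real.exp (-(p j) * x))^2 := by
        simp only [hGdef, show (-(p j) * x) = -(p j * x) by ring]
        field_simp
      rw [heq, Real.sqrt_sq (huterm_nonneg j)]
  have hCS : uF p x ≤ Real.sqrt (vF p x * ∑' j, G j) := by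
    apply Summable.tsum_le_of_sum_le husum
    intro s
    have h1 : (∑ j ∈ s, p j * x * Real.exp (-(p j) * x))^2
        ≤ vF p x * ∑' j, G j := by
      have h2 := Finset.sum_mul_sq_le_sq_mul_sq s
        (fun j => Real.sqrt (Real.exp (-(p j) * x) * (1 - Real.exp (-(p j) * x))))
        (fun j => Real.sqrt (G j))
      simp only [Real.sq_sqrt (hvterm_nonneg _), Real.sq_sqrt (hG_nonneg _), hterm_eq] at h2
      calc (∑ j ∈ s, p j * x * Real.exp (-(p j) * x))^2
          ≤ (∑ j ∈ s, Real.exp (-(p j) * x) * (1 - Real.exp (-(p j) * x)))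
            * ∑ j ∈ s, G j := h2
        _ ≤ vF p x * ∑' j, G j := by
            apply mul_le_mul (Summable.sum_le_tsum s (fun j _ => hvterm_nonneg j) hvsum)
              (Summable.sum_le_tsum s (fun j _ => hG_nonneg j) hGsum)
              (Finset.sum_nonneg (fun j _ => hG_nonneg j)) hv_nonneg
    have h3 : (0:ℝ) ≤ ∑ j ∈ s, p j * x * Real.exp (-(p j) * x) :=
      Finset.sum_nonneg (fun j _ => huterm_nonneg j)
    calc ∑ j ∈ s, p j * x * Real.exp (-(p j) * x)
        = Real.sqrt ((∑ j ∈ s, p j * x * Real.exp (-(p j) * x))^2) :=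
          (Real.sqrt_sq h3).symm
      _ ≤ Real.sqrt (vF p x * ∑' j, G j) := Real.sqrt_le_sqrt h1
  have hu_nonneg : 0 ≤ uF p x := tsum_nonneg huterm_nonneg
  have hu2 : (uF p x)^2 ≤ vF p x * ∑' j, G j := by
    calc (uF p x)^2 ≤ (Real.sqrt (vF p x * ∑' j, G j))^2 := by
          apply pow_le_pow_left₀ hu_nonneg hCS
      _ = vF p x * ∑' j, G j := Real.sq_sqrt (mul_nonneg hv_nonneg hGsum_nonneg)
  -- bound ∑' G ≤ (4/5) x
  have hGx : (∑' j, G j) ≤ (4/5) * x := by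
    have h1 : (∑' j, G j) ≤ ∑' j, D j := Summable.tsum_le_tsum hGD hGsum hDsum
    have h2 : (∑' j, D j) = x - (2/5) * ((∑' j, if 1 < p j * x then p j else 0) * x) := by
      simp only [hDdef]
      rw [Summable.tsum_sub hsumt (hindsum.mul_left (2/5)), tsum_mul_right, hps, one_mul,
        tsum_mul_left]
      congr 2
      rw [← tsum_mul_right]
      congr 1; funext j; split <;> simp
    have h3 : x/2 ≤ (∑' j, if 1 < p j * x then p j else 0) * x := by
      have := mul_le_mul_of_nonneg_right hhalf hx
      linarith
    rw [h2] at h1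
    linarith
  -- conclude
  have hkey : (uF p x)^2 / x ≤ (4/5) * vF p x := by
    rw [div_le_iff₀ hxpos]
    calc (uF p x)^2 ≤ vF p x * ∑' j, G j := hu2
      _ ≤ vF p x * ((4/5) * x) := mul_le_mul_of_nonneg_left hGx hv_nonneg
      _ = 4/5 * vF p x * x := by ring
  constructor
  · simp only [sigma2F]
    linarith
  · simp only [sigma2F]
    have : 0 ≤ (uF p x)^2 / x := div_nonneg (sq_nonneg _) hx
    linarith
end

section
/- For every r ≥ 0 and every θ ∈ ℝ, with z = r·e^{iθ} ∈ ℂ, one has |e^z − 1| ≤ (e^r − 1)·e^{−r(1 − cos θ)/2}. -/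
/-!
Write `z = a + bi` with `R = |z|`. Then `|e^z - 1|² = 2eᵃ(cosh a - cos b)`, while the square of the
right-hand side is `2eᵃ(cosh R - 1)`. So it suffices that `cosh a - cos b ≤ cosh R - 1`, which
follows from `1 - cos b ≤ b²/2` and from the monotonicity of `cosh x - x²/2` on `[0, ∞)`, since
`R² - a² = b²`.
-/

open Real hiding abs_exp_sub_one_le
open Complex

namespace Real

theorem monotoneOn_cosh_sub_sq_div_two : MonotoneOn (fun x => cosh x - x ^ 2 / 2) (Set.Ici 0) := by
  have hderiv (x : ℝ) : HasDerivAt (fun x => cosh x - x ^ 2 / 2) (sinh x - x) x := by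
    simpa using (hasDerivAt_cosh x).fun_sub ((hasDerivAt_pow 2 x).div_const 2)
  refine monotoneOn_of_deriv_nonneg (convex_Ici 0) (by fun_prop) (by fun_prop) fun x hx => ?_
  rw [interior_Ici] at hx
  rw [(hderiv x).deriv, sub_nonneg]
  exact self_le_sinh_iff.2 (le_of_lt hx)

theorem exp_sub_one_sq (x : ℝ) : (exp x - 1) ^ 2 = 2 * exp x * (cosh x - 1) := by
  rw [cosh_eq, exp_neg]
  field_simp
  ring

end Real

namespace Complex

theorem norm_exp_sub_one_sq (z : ℂ) :
    ‖exp z - 1‖ ^ 2 = 2 * Real.exp z.re * (Real.cosh z.re - Real.cos z.im) := by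
  rw [Complex.sq_norm, normSq_apply, sub_re, sub_im, exp_re, exp_im, one_re, one_im,
    Real.cosh_eq, Real.exp_neg]
  field_simp
  linear_combination (Real.exp z.re) ^ 2 * Real.sin_sq_add_cos_sq z.im

theorem cosh_re_sub_cos_im_le (z : ℂ) : Real.cosh z.re - Real.cos z.im ≤ Real.cosh ‖z‖ - 1 := by
  have hcosh : Real.cosh |z.re| - |z.re| ^ 2 / 2 ≤ Real.cosh ‖z‖ - ‖z‖ ^ 2 / 2 :=
    Real.monotoneOn_cosh_sub_sq_div_two (Set.mem_Ici.2 (abs_nonneg _))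
      (Set.mem_Ici.2 (norm_nonneg _)) (abs_re_le_norm z)
  have hcos := Real.one_sub_sq_div_two_le_cos (x := z.im)
  rw [Real.cosh_abs, sq_abs] at hcosh
  linarith [sq_norm_sub_sq_re z]

theorem norm_exp_sub_one_le_mul_exp_re_sub_norm (z : ℂ) :
    ‖exp z - 1‖ ≤ (Real.exp ‖z‖ - 1) * Real.exp ((z.re - ‖z‖) / 2) := by
  have hR : 0 ≤ Real.exp ‖z‖ - 1 := by linarith [Real.one_le_exp (norm_nonneg z)]
  have hrhs : 0 ≤ (Real.exp ‖z‖ - 1) * Real.exp ((z.re - ‖z‖) / 2) :=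
    mul_nonneg hR (Real.exp_pos _).le
  refine (pow_le_pow_iff_left₀ (norm_nonneg _) hrhs two_ne_zero).1 ?_
  calc ‖exp z - 1‖ ^ 2 = 2 * Real.exp z.re * (Real.cosh z.re - Real.cos z.im) :=
        norm_exp_sub_one_sq z
    _ ≤ 2 * Real.exp z.re * (Real.cosh ‖z‖ - 1) :=
        mul_le_mul_of_nonneg_left (cosh_re_sub_cos_im_le z) (by positivity)
    _ = ((Real.exp ‖z‖ - 1) * Real.exp ((z.re - ‖z‖) / 2)) ^ 2 := by
        have hexp : Real.exp ((z.re - ‖z‖) / 2) ^ 2 * Real.exp ‖z‖ = Real.exp z.re := by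
          rw [← Real.exp_nat_mul, ← Real.exp_add]
          ring_nf
        rw [mul_pow, Real.exp_sub_one_sq]
        linear_combination -2 * (Real.cosh ‖z‖ - 1) * hexp

end Complex

/-- Lemma 5.1: for `z = r e^{iθ}` with `r ≥ 0`,
`|e^z − 1| ≤ (e^r − 1) e^{−r(1−cos θ)/2}`. -/
theorem abs_exp_sub_one_le (r θ : ℝ) (hr : 0 ≤ r) :
    ‖Complex.exp ((r : ℂ) * Complex.exp ((θ : ℂ) * Complex.I)) - 1‖
      ≤ (Real.exp r - 1) * Real.exp (-r * (1 - Real.cos θ) / 2) := by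
  set z := (r : ℂ) * Complex.exp ((θ : ℂ) * Complex.I)
  have hnorm : ‖z‖ = r := by
    rw [norm_mul, norm_exp_ofReal_mul_I, mul_one, norm_real, Real.norm_of_nonneg hr]
  have hre : z.re = r * Real.cos θ := by
    simp only [z, re_ofReal_mul, exp_ofReal_mul_I_re]
  have hexponent : (z.re - ‖z‖) / 2 = -r * (1 - Real.cos θ) / 2 := by
    rw [hre, hnorm]
    ring
  have h := norm_exp_sub_one_le_mul_exp_re_sub_norm z
  rwa [hexponent, hnorm] at h
end

section
/- There exists a constant c > 0 (one may take c = 1/(2π²)) such that for all r ≥ 1 and all θ ∈ ℝ with |θ| ≤ π, 1 + |e^{r e^{iθ}} − 1| ≤ e^{r − c r θ²}. -/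
/-!
Write `z = r e^{iθ}` and `u = r (1 - cos θ) / 2`, so that `u ≥ r θ² / π²`. From
`e^z - 1 = 2 e^{z/2} sinh (z/2)` and `‖sinh w‖ ≤ sinh ‖w‖` we get
`‖e^z - 1‖ ≤ e^{r-u} - e^{-u}`. By convexity of `exp`, the deficit `e^{r-u/10} - e^{r-u}` is at
least `(9/10) e^{r-u/10} (1 - e^{-u})`, which beats `1 - e^{-u}` as soon as `r ≥ 1`.
-/

open Real Complex

theorem Complex.norm_sinh_le_sinh_norm (z : ℂ) : ‖Complex.sinh z‖ ≤ Real.sinh ‖z‖ :=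
  (hasSum_sinh z).norm_le_of_bounded (Real.hasSum_sinh ‖z‖) fun n => by
    rw [norm_div, norm_pow, Complex.norm_natCast]

theorem Complex.norm_exp_sub_one_le_exp_sub_exp (z : ℂ) :
    ‖Complex.exp z - 1‖ ≤ Real.exp ((z.re + ‖z‖) / 2) - Real.exp ((z.re - ‖z‖) / 2) := by
  have hsplit : Complex.exp z - 1 = Complex.exp (z / 2) * (2 * Complex.sinh (z / 2)) := by
    rw [Complex.sinh, mul_div_cancel₀ _ two_ne_zero, mul_sub, ← Complex.exp_add,
      ← Complex.exp_add, add_halves, add_neg_cancel, Complex.exp_zero]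
  have hsinh : Real.exp (z.re / 2) * (2 * Real.sinh (‖z‖ / 2))
      = Real.exp ((z.re + ‖z‖) / 2) - Real.exp ((z.re - ‖z‖) / 2) := by
    rw [Real.sinh_eq, mul_div_cancel₀ _ two_ne_zero, mul_sub, ← Real.exp_add, ← Real.exp_add]
    ring_nf
  calc ‖Complex.exp z - 1‖ = Real.exp (z.re / 2) * (2 * ‖Complex.sinh (z / 2)‖) := by
        rw [hsplit, norm_mul, Complex.norm_exp, norm_mul, Complex.norm_two, Complex.div_ofNat_re]
    _ ≤ Real.exp (z.re / 2) * (2 * Real.sinh (‖z‖ / 2)) := by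
        gcongr
        simpa using (z / 2).norm_sinh_le_sinh_norm
    _ = _ := hsinh

theorem Real.exp_neg_mul_le (u : ℝ) {t : ℝ} (ht0 : 0 ≤ t) (ht1 : t ≤ 1) :
    Real.exp (-(t * u)) ≤ 1 - t + t * Real.exp (-u) := by
  simpa [smul_eq_mul] using convexOn_exp.2 (Set.mem_univ 0) (Set.mem_univ (-u))
    (sub_nonneg.2 ht1) ht0 (sub_add_cancel 1 t)

theorem one_sub_exp_neg_add_exp_sub_le {r u s : ℝ} (hu : 0 ≤ u) (hs0 : 0 ≤ s) (hs1 : s ≤ 1)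
    (h : 1 ≤ (1 - s) * Real.exp (r - s * u)) :
    1 - Real.exp (-u) + Real.exp (r - u) ≤ Real.exp (r - s * u) := by
  have hsplit : Real.exp (r - u) = Real.exp (r - s * u) * Real.exp (-((1 - s) * u)) := by
    rw [← Real.exp_add]; ring_nf
  have hconv := Real.exp_neg_mul_le u (sub_nonneg.2 hs1) (sub_le_self 1 hs0)
  have hpos := Real.exp_pos (r - s * u)
  rw [hsplit]
  nlinarith [Real.exp_le_one_iff.2 (neg_nonpos.2 hu)]

theorem one_sub_exp_neg_add_exp_sub_le_exp_sub_div_ten {r u : ℝ} (hr : 1 ≤ r) (hu0 : 0 ≤ u)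
    (hur : u ≤ r) : 1 - Real.exp (-u) + Real.exp (r - u) ≤ Real.exp (r - 1 / 10 * u) := by
  refine one_sub_exp_neg_add_exp_sub_le hu0 (by norm_num) (by norm_num) ?_
  have h19 : (1.9 : ℝ) ≤ Real.exp (9 / 10) := by linarith [Real.add_one_le_exp (9 / 10 : ℝ)]
  have hmono : Real.exp (9 / 10) ≤ Real.exp (r - 1 / 10 * u) := Real.exp_le_exp.2 (by linarith)
  linarith

/-- Lemma 5.2: there is a constant `c > 0` (one may take
`c = 1/(2π²)`) such that `1 + |e^{r e^{iθ}} − 1| ≤ e^{r − c r θ²}` for all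
`r ≥ 1` and `|θ| ≤ π`. -/
theorem one_add_abs_exp_sub_one_le :
    ∃ c : ℝ, 0 < c ∧
      ∀ r θ : ℝ, 1 ≤ r → |θ| ≤ π →
        1 + ‖Complex.exp ((r : ℂ) * Complex.exp ((θ : ℂ) * Complex.I)) - 1‖
          ≤ Real.exp (r - c * r * θ ^ 2) := by
  refine ⟨1 / (10 * π ^ 2), by positivity, fun r θ hr hθ => ?_⟩
  set z : ℂ := r * Complex.exp (θ * Complex.I)
  set u := r * (1 - Real.cos θ) / 2 with hu
  have hnorm : ‖z‖ = r := by
    rw [norm_mul, Complex.norm_exp_ofReal_mul_I, mul_one, Complex.norm_real,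
      Real.norm_of_nonneg (by linarith)]
  have hre : z.re = r * Real.cos θ := by simp [z, Complex.exp_ofReal_mul_I_re]
  have hu0 : 0 ≤ u := by have := Real.cos_le_one θ; positivity
  have hur : u ≤ r := by
    rw [hu]
    nlinarith [mul_nonneg (by linarith : 0 ≤ r) (neg_le_iff_add_nonneg.1 (Real.neg_one_le_cos θ))]
  have hθu : r * θ ^ 2 / π ^ 2 ≤ u :=
    calc r * θ ^ 2 / π ^ 2 = r * (2 / π ^ 2 * θ ^ 2) / 2 := by ring
      _ ≤ u := by rw [hu]; gcongr; linarith [Real.cos_le_one_sub_mul_cos_sq hθ]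
  calc 1 + ‖Complex.exp z - 1‖ ≤ 1 - Real.exp (-u) + Real.exp (r - u) := by
        have := z.norm_exp_sub_one_le_exp_sub_exp
        rw [hnorm, hre, show (r * Real.cos θ + r) / 2 = r - u by rw [hu]; ring,
          show (r * Real.cos θ - r) / 2 = -u by rw [hu]; ring] at this
        linarith
    _ ≤ Real.exp (r - 1 / 10 * u) := one_sub_exp_neg_add_exp_sub_le_exp_sub_div_ten hr hu0 hur
    _ ≤ Real.exp (r - 1 / (10 * π ^ 2) * r * θ ^ 2) := by
        refine Real.exp_le_exp.2 ?_
        linarith [show 1 / (10 * π ^ 2) * r * θ ^ 2 = 1 / 10 * (r * θ ^ 2 / π ^ 2) by ring]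
end

section
/- There exists an absolute constant C > 0 such that for every probability mass function p on ℕ and every x ≥ 0, u(x) ≤ C · min( x, (v(x) + 1)·(1 + max(log x, 0)) ). -/
open Real

lemma half_le {t : ℝ} (ht0 : 0 ≤ t) (ht1 : t ≤ 1) :
    t / 2 ≤ 1 - Real.exp (-t) := by
  have h2 : Real.exp (-t) * (1 + t) ≤ 1 := by
    have h1 : 1 + t ≤ Real.exp t := by linarith [Real.add_one_le_exp t]
    have h3 : Real.exp (-t) * Real.exp t = 1 := by
      rw [← Real.exp_add]; simp
    nlinarith [Real.exp_pos (-t)]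
  nlinarith [Real.exp_pos (-t)]

lemma key (p x : ℝ) (hp : 0 ≤ p) (hx : Real.exp 1 ≤ x) (hL : 1 ≤ Real.log x) :
    p * x * Real.exp (-(p * x)) ≤
      4 * (1 + Real.log x) * (Real.exp (-(p * x)) * (1 - Real.exp (-(p * x)))) + p := by
  have hxpos : 0 < x := lt_of_lt_of_le (Real.exp_pos 1) hx
  set L := Real.log x with hLdef
  set t := p * x with htdef
  have ht0 : 0 ≤ t := mul_nonneg hp hxpos.le
  set E := Real.exp (-t) with hEdef
  have hE0 : 0 < E := Real.exp_pos _
  have hE1 : E ≤ 1 := Real.exp_le_one_iff.mpr (by linarith)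
  rcases le_or_gt t 1 with h1 | h1
  · -- small t
    have hh : t / 2 ≤ 1 - E := half_le ht0 h1
    have h4 : 0 ≤ (1 + L) * (E * (1 - E) - E * (t / 2)) :=
      mul_nonneg (by linarith) (by nlinarith)
    nlinarith [mul_nonneg hE0.le ht0]
  · rcases le_or_gt t (2 * L) with h2 | h2
    · -- middle range
      have hEe : E ≤ Real.exp (-1) := Real.exp_le_exp.mpr (by linarith)
      have hexp1 : (2:ℝ) ≤ Real.exp 1 := by
        have := Real.exp_one_gt_d9; linarith
      have hEhalf : E ≤ 1 / 2 := by
        have h3 : Real.exp (-1) * Real.exp 1 = 1 := by rw [← Real.exp_add]; simp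
        nlinarith [Real.exp_pos (1:ℝ)]
      have h4 : 0 ≤ (1 + L) * (E * (1 - E) - E * (1 / 2)) :=
        mul_nonneg (by linarith) (by nlinarith)
      have h5 : t * E ≤ 2 * L * E := by nlinarith
      nlinarith
    · -- large t
      have hexpL : Real.exp L = x := Real.exp_log hxpos
      have hE2 : E ≤ Real.exp (-(2 * L)) := Real.exp_le_exp.mpr (by linarith)
      have hprod : Real.exp (-(2 * L)) * (Real.exp L * Real.exp L) = 1 := by
        rw [← Real.exp_add, ← Real.exp_add, show -(2*L)+(L+L) = (0:ℝ) from by ring, Real.exp_zero]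
      have hx1 : (1:ℝ) ≤ x := le_trans (by nlinarith [Real.exp_one_gt_d9]) hx
      rw [hexpL] at hprod
      have h6 : E * (x * x) ≤ 1 := by
        nlinarith [mul_nonneg (mul_nonneg (sub_nonneg.mpr hE2) hxpos.le) hxpos.le]
      have hxE : x * E ≤ 1 := by
        nlinarith [mul_nonneg (mul_nonneg (sub_nonneg.mpr hx1) hE0.le) hxpos.le]
      have htE : t * E ≤ p := by
        calc t * E = p * (x * E) := by ring
        _ ≤ p * 1 := by nlinarith
        _ = p := mul_one p
      nlinarith [mul_nonneg (mul_nonneg hE0.le (by linarith : (0:ℝ) ≤ 1 - E)) (by linarith : (0:ℝ) ≤ 1 + L)]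

/-- Lemma 5.4: `u(x) = O(x ∧ (v(x)+1)(1 + log₊ x))` with an
absolute constant. -/
theorem u_bound :
    ∃ C : ℝ, 0 < C ∧
      ∀ (p : ℕ → ℝ), (∀ j, 0 ≤ p j) → (∑' j, p j) = 1 →
      ∀ x : ℝ, 0 ≤ x →
        uF p x ≤ C * min x ((vF p x + 1) * (1 + max (Real.log x) 0)) := by
  refine ⟨4, by norm_num, ?_⟩
  intro p hp hsum x hx
  have hps : Summable p := by
    by_contra h
    rw [tsum_eq_zero_of_not_summable h] at hsum
    norm_num at hsum
  have htx : ∀ j, 0 ≤ p j * x := fun j => mul_nonneg (hp j) hx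
  have hterm : ∀ j, 0 ≤ p j * x * Real.exp (-(p j) * x) := fun j =>
    mul_nonneg (htx j) (Real.exp_pos _).le
  have hE1 : ∀ j, Real.exp (-(p j) * x) ≤ 1 := fun j =>
    Real.exp_le_one_iff.mpr (by nlinarith [htx j])
  have hus : Summable (fun j => p j * x * Real.exp (-(p j) * x)) := by
    apply Summable.of_nonneg_of_le hterm (fun j => ?_) (hps.mul_right x)
    nlinarith [hE1 j, htx j, Real.exp_pos (-(p j) * x)]
  have hvterm : ∀ j, 0 ≤ Real.exp (-(p j) * x) * (1 - Real.exp (-(p j) * x)) := fun j =>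
    mul_nonneg (Real.exp_pos _).le (by linarith [hE1 j])
  have hvs : Summable (fun j => Real.exp (-(p j) * x) * (1 - Real.exp (-(p j) * x))) := by
    apply Summable.of_nonneg_of_le hvterm (fun j => ?_) (hps.mul_right x)
    have h1 := Real.add_one_le_exp (-(p j) * x)
    nlinarith [Real.exp_pos (-(p j) * x), hE1 j]
  have hux : uF p x ≤ x := by
    have h := Summable.tsum_le_tsum (f := fun j => p j * x * Real.exp (-(p j) * x))
      (g := fun j => p j * x)
      (fun j => by
        show p j * x * Real.exp (-(p j) * x) ≤ p j * x
        nlinarith [hE1 j, htx j, Real.exp_pos (-(p j) * x)])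
      hus (hps.mul_right x)
    rw [tsum_mul_right, hsum, one_mul] at h
    exact h
  have hv : 0 ≤ vF p x := tsum_nonneg hvterm
  have hm : 0 ≤ max (Real.log x) 0 := le_max_right _ _
  have hb1 : uF p x ≤ 4 * x := by linarith
  have hb2 : uF p x ≤ 4 * ((vF p x + 1) * (1 + max (Real.log x) 0)) := by
    rcases lt_or_ge x (Real.exp 1) with hc | hc
    · have : x < 4 := by nlinarith [Real.exp_one_lt_d9]
      nlinarith
    · have hxpos : 0 < x := lt_of_lt_of_le (Real.exp_pos 1) hc
      have hL : 1 ≤ Real.log x := (Real.le_log_iff_exp_le hxpos).mpr hc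
      have hmax : max (Real.log x) 0 = Real.log x := max_eq_left (by linarith)
      have hk : ∀ j, p j * x * Real.exp (-(p j) * x) ≤
          4 * (1 + Real.log x) *
            (Real.exp (-(p j) * x) * (1 - Real.exp (-(p j) * x))) + p j := by
        intro j
        rw [neg_mul]
        exact key (p j) x (hp j) hc hL
      have h := Summable.tsum_le_tsum hk hus ((hvs.mul_left _).add hps)
      rw [Summable.tsum_add (hvs.mul_left _) hps, tsum_mul_left, hsum] at h
      have h' : uF p x ≤ 4 * (1 + Real.log x) * vF p x + 1 := h
      rw [hmax]
      nlinarith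
  rcases le_total x ((vF p x + 1) * (1 + max (Real.log x) 0)) with hmin | hmin
  · rw [min_eq_left hmin]; exact hb1
  · rw [min_eq_right hmin]; exact hb2
end

section
/- Let ζ ∈ ℂ with |ζ| = 1, let r ≥ 0 and let θ ∈ ℝ with |θ| ≤ π. Then (i) |ζ + e^{ζ r e^{iθ}} − 1| ≤ e^r; and (ii) there exists an absolute constant c > 0 such that if moreover 0 ≤ r ≤ 1, then |ζ + e^{ζ r e^{iθ}} − 1| ≤ e^{r − c r θ²}. -/
/-!
Write `w = ζ z` with `z = r e^{iθ}`. Bounding `e^w - 1` by its power series gives (i) at once.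
For (ii) split `ζ + e^w - 1 = ζ (1 + z) + (e^w - 1 - w)`: the tail is at most `e^r - 1 - r`,
while for `r ≤ 1` the modulus of `1 + z` falls short of `1 + r` by at least
`r (1 - cos θ) / 2 ≥ r θ² / π²`, and this deficit is absorbed into the exponent.
-/

open Real Complex

namespace Complex

lemma norm_exp_sub_one_le_exp_norm_sub_one (w : ℂ) : ‖exp w - 1‖ ≤ Real.exp ‖w‖ - 1 := by
  simpa using norm_exp_sub_sum_le_exp_norm_sub_sum w 1

lemma norm_exp_sub_one_sub_self_le (w : ℂ) : ‖exp w - 1 - w‖ ≤ Real.exp ‖w‖ - 1 - ‖w‖ := by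
  simpa [Finset.sum_range_succ, sub_sub] using norm_exp_sub_sum_le_exp_norm_sub_sum w 2

lemma norm_one_add_le_of_norm_le_one {z : ℂ} (hz : ‖z‖ ≤ 1) :
    ‖1 + z‖ ≤ 1 + ‖z‖ - (‖z‖ - z.re) / 2 := by
  obtain ⟨hre', hre⟩ := abs_le.1 (abs_re_le_norm z)
  have hsq : ‖1 + z‖ ^ 2 = 1 + 2 * z.re + ‖z‖ ^ 2 := by
    have h1z := sq_norm_sub_sq_re (1 + z)
    simp only [add_re, one_re, add_im, one_im, zero_add] at h1z
    linear_combination h1z - sq_norm_sub_sq_re z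
  -- with `d = ‖z‖ - re z`, the square of the right side exceeds `‖1 + z‖²` by `d (1 - ‖z‖) + d² / 4`
  refine (abs_le_of_sq_le_sq' ?_ (by linarith)).2
  rw [hsq]
  nlinarith [mul_nonneg (sub_nonneg.2 hre) (sub_nonneg.2 hz)]

lemma norm_add_exp_sub_one_le (ζ w : ℂ) : ‖ζ + exp w - 1‖ ≤ ‖ζ‖ + Real.exp ‖w‖ - 1 :=
  calc ‖ζ + exp w - 1‖ = ‖ζ + (exp w - 1)‖ := by rw [add_sub_assoc]
    _ ≤ ‖ζ‖ + ‖exp w - 1‖ := norm_add_le _ _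
    _ ≤ ‖ζ‖ + Real.exp ‖w‖ - 1 := by
      linarith [norm_exp_sub_one_le_exp_norm_sub_one w]

lemma norm_add_exp_mul_sub_one_le {ζ z : ℂ} (hζ : ‖ζ‖ = 1) (hz : ‖z‖ ≤ 1) :
    ‖ζ + exp (ζ * z) - 1‖ ≤ Real.exp ‖z‖ - (‖z‖ - z.re) / 2 := by
  have hζz : ‖ζ * z‖ = ‖z‖ := by rw [norm_mul, hζ, one_mul]
  calc ‖ζ + exp (ζ * z) - 1‖ = ‖ζ * (1 + z) + (exp (ζ * z) - 1 - ζ * z)‖ := by ring_nf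
    _ ≤ ‖1 + z‖ + (Real.exp ‖z‖ - 1 - ‖z‖) := by
      refine (norm_add_le _ _).trans (add_le_add (by rw [norm_mul, hζ, one_mul]) ?_)
      simpa only [hζz] using norm_exp_sub_one_sub_self_le (ζ * z)
    _ ≤ Real.exp ‖z‖ - (‖z‖ - z.re) / 2 := by
      linarith [norm_one_add_le_of_norm_le_one hz]

end Complex

namespace Real

lemma exp_sub_le_exp_sub_of_exp_mul_le {r x y : ℝ} (h : exp r * x ≤ y) :
    exp r - y ≤ exp (r - x) :=
  calc exp r - y ≤ exp r * (1 - x) := by linarith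
    _ ≤ exp r * exp (-x) := by gcongr; linarith [add_one_le_exp (-x)]
    _ = exp (r - x) := by rw [← exp_add, sub_eq_add_neg]

lemma exp_mul_mul_sq_le_mul_one_sub_cos {r θ : ℝ} (hr : 0 ≤ r) (hr1 : r ≤ 1) (hθ : |θ| ≤ π) :
    exp r * (1 / (3 * π ^ 2) * r * θ ^ 2) ≤ r * (1 - cos θ) / 2 := by
  have hexp : exp r ≤ 3 := (exp_le_exp.2 hr1).trans (exp_one_lt_d9.le.trans (by norm_num))
  have hcos := cos_le_one_sub_mul_cos_sq hθ
  calc exp r * (1 / (3 * π ^ 2) * r * θ ^ 2) ≤ 3 * (1 / (3 * π ^ 2) * r * θ ^ 2) := by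
        gcongr
    _ = r * (2 / π ^ 2 * θ ^ 2) / 2 := by field_simp
    _ ≤ r * (1 - cos θ) / 2 := by gcongr; linarith

end Real

/-- Lemma 6.3: for `|ζ| = 1`, `r ≥ 0` and `|θ| ≤ π`:
(i) `|ζ + e^{ζ r e^{iθ}} − 1| ≤ e^r`; and (ii) there is an absolute constant
`c > 0` such that if moreover `r ≤ 1` then
`|ζ + e^{ζ r e^{iθ}} − 1| ≤ e^{r − c r θ²}`. -/
theorem abs_zeta_add_exp_sub_one_le :
    ∃ c : ℝ, 0 < c ∧
      ∀ (ζ : ℂ) (r θ : ℝ), ‖ζ‖ = 1 → 0 ≤ r → |θ| ≤ π →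
        ‖ζ + Complex.exp (ζ * (r : ℂ) * Complex.exp ((θ : ℂ) * Complex.I)) - 1‖
            ≤ Real.exp r
        ∧ (r ≤ 1 →
            ‖ζ + Complex.exp (ζ * (r : ℂ) * Complex.exp ((θ : ℂ) * Complex.I)) - 1‖
              ≤ Real.exp (r - c * r * θ ^ 2)) := by
  refine ⟨1 / (3 * π ^ 2), by positivity, fun ζ r θ hζ hr hθ => ?_⟩
  set z : ℂ := r * exp (θ * I)
  have hz : ‖z‖ = r := by simp [z, norm_exp_ofReal_mul_I, abs_of_nonneg hr]
  have hzre : z.re = r * Real.cos θ := by simp [z, exp_ofReal_mul_I_re]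
  rw [mul_assoc]
  refine ⟨by simpa [hζ, hz] using norm_add_exp_sub_one_le ζ (ζ * z), fun hr1 => ?_⟩
  calc ‖ζ + exp (ζ * z) - 1‖ ≤ Real.exp r - r * (1 - Real.cos θ) / 2 := by
        have hbound := norm_add_exp_mul_sub_one_le hζ (hz.trans_le hr1)
        rwa [hz, hzre, ← mul_one_sub] at hbound
    _ ≤ Real.exp (r - 1 / (3 * π ^ 2) * r * θ ^ 2) :=
      exp_sub_le_exp_sub_of_exp_mul_le (exp_mul_mul_sq_le_mul_one_sub_cos hr hr1 hθ)
end

section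
/- For each n ∈ ℕ let p^{(n)} be a probability mass function on ℕ, let X₁, …, X_n be i.i.d. with ℙ(Xᵢ = j) = p^{(n)}_j, and let Z_n be the number of distinct values among X₁, …, X_n. Suppose that (1/2)·∑_j (p^{(n)}_j · n)² → λ for some λ ∈ [0, ∞) and that sup_j (p^{(n)}_j · n) → 0 as n → ∞. Then n − Z_n converges in distribution to a Poisson random variable with mean λ; equivalently, for every k ∈ ℕ, ℙ(n − Z_n = k) → e^{−λ} λ^k / k! as n → ∞. -/
/-!
Let `D` count the colliding pairs `i < j` (those with `X i = X j`). Off the event that three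
coordinates coincide, whose probability is at most `n ^ 3 * ∑ p ^ 3 → 0`, one has `n - Z = D`.
Double counting gives `k ℙ(D = k) = ∑_{i < j} ℙ(X i = X j, D = k)`. Given that the pair `{i, j}`
collides, `D - 1` is the number of collisions among the remaining coordinates unless a third
coordinate hits the pair; that number is independent of `(X i, X j)`, and it equals `D` unless some
coordinate hits `{i, j}`. Hence `k ℙ(D = k) - λₙ ℙ(D = k - 1) → 0` with `λₙ = C(n, 2) ∑ p ^ 2 → λ`,
and this recursion, with Markov's bound `K ℙ(D ≥ K) ≤ λₙ` for tightness, forces the Poisson limit.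
-/

open MeasureTheory ProbabilityTheory Real Filter Topology Finset

def NoTripleCollision {ι α : Type*} [LT ι] (f : ι → α) : Prop :=
  ∀ ⦃i j k : ι⦄, i < j → j < k → f i = f j → f j ≠ f k

section Collisions

variable {ι α : Type*} [Fintype ι] [LinearOrder ι] [DecidableEq α]

def collisions (f : ι → α) : Finset (ι × ι) := {e | e.1 < e.2 ∧ f e.1 = f e.2}

def repeatedIndices (f : ι → α) : Finset ι := {j | ∃ i < j, f i = f j}

def collisionsAwayFrom (S : Finset ι) (f : ι → α) : Finset (ι × ι) :=
  {e ∈ collisions f | e.1 ∉ S ∧ e.2 ∉ S}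

@[simp]
lemma mem_collisions {f : ι → α} {e : ι × ι} :
    e ∈ collisions f ↔ e.1 < e.2 ∧ f e.1 = f e.2 := by
  simp [collisions]

lemma collisions_subset_filter_lt (f : ι → α) :
    collisions f ⊆ ({e : ι × ι | e.1 < e.2} : Finset (ι × ι)) :=
  fun e he => mem_filter.2 ⟨mem_univ e, (mem_collisions.1 he).1⟩

lemma card_image_add_card_repeatedIndices (f : ι → α) :
    #(univ.image f) + #(repeatedIndices f) = Fintype.card ι := by
  have hfirst : #({j | ¬∃ i < j, f i = f j} : Finset ι) = #(univ.image f) := by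
    refine card_bij (fun j _ => f j) (fun j _ => mem_image_of_mem f (mem_univ j)) ?_ ?_
    · intro i hi j hj hij
      simp only [mem_filter, mem_univ, true_and, not_exists, not_and] at hi hj
      rcases lt_trichotomy i j with h | h | h
      · exact absurd hij (hj i h)
      · exact h
      · exact absurd hij.symm (hi j h)
    · simp only [mem_image, mem_univ, true_and, forall_exists_index, forall_apply_eq_imp_iff]
      intro i
      obtain ⟨j, hj, hmin⟩ := ({j | f j = f i} : Finset ι).exists_min_image id ⟨i, by simp⟩
      simp only [mem_filter, mem_univ, true_and, id] at hj hmin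
      refine ⟨j, ?_, hj⟩
      simp only [mem_filter, mem_univ, true_and, not_exists, not_and]
      exact fun l hl hlj => (hmin l (hlj.trans hj)).not_gt hl
  rw [← hfirst, add_comm, repeatedIndices, card_filter_add_card_filter_not, card_univ]

lemma card_collisions_eq_card_repeatedIndices {f : ι → α} (h : NoTripleCollision f) :
    #(collisions f) = #(repeatedIndices f) := by
  refine card_bij (fun e _ => e.2) ?_ ?_ ?_
  · intro e he
    rw [mem_collisions] at he
    simpa [repeatedIndices] using ⟨e.1, he.1, he.2⟩
  · rintro ⟨i, j⟩ he ⟨i', j'⟩ he' (rfl : j = j')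
    rw [mem_collisions] at he he'
    rcases lt_trichotomy i i' with hii' | rfl | hii'
    · exact (h hii' he'.1 (he.2.trans he'.2.symm) he'.2).elim
    · rfl
    · exact (h hii' he.1 (he'.2.trans he.2.symm) he.2).elim
  · intro j hj
    simp only [repeatedIndices, mem_filter, mem_univ, true_and] at hj
    obtain ⟨i, hij, hf⟩ := hj
    exact ⟨(i, j), mem_collisions.2 ⟨hij, hf⟩, rfl⟩

lemma card_sub_card_image_eq_card_collisions {f : ι → α} (h : NoTripleCollision f) :
    Fintype.card ι - #(univ.image f) = #(collisions f) := by
  rw [card_collisions_eq_card_repeatedIndices h, ← card_image_add_card_repeatedIndices f]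
  omega

lemma dependsOn_collisionsAwayFrom (S : Finset ι) :
    DependsOn (collisionsAwayFrom (α := α) S) (↑S)ᶜ := by
  intro f g hfg
  simp only [Set.mem_compl_iff, mem_coe] at hfg
  ext e
  simp only [collisionsAwayFrom, mem_filter, mem_collisions]
  grind

lemma card_collisions_eq_card_collisionsAwayFrom_add_one {f : ι → α} {a b : ι} (hab : a < b)
    (hf : f a = f b) (hc : ∀ c ∉ ({a, b} : Finset ι), f c ≠ f a) :
    #(collisions f) = #(collisionsAwayFrom {a, b} f) + 1 := by
  have hinsert : collisions f = insert (a, b) (collisionsAwayFrom {a, b} f) := by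
    ext ⟨i, j⟩
    simp only [mem_collisions, collisionsAwayFrom, mem_insert, mem_filter, Prod.mk.injEq] at hc ⊢
    grind
  rw [hinsert, card_insert_of_notMem (by simp [collisionsAwayFrom])]

lemma collisionsAwayFrom_eq_collisions {f : ι → α} {S : Finset ι}
    (hS : ∀ s ∈ S, ∀ c ≠ s, f c ≠ f s) : collisionsAwayFrom S f = collisions f := by
  refine filter_true_of_mem fun e he => ?_
  rw [mem_collisions] at he
  exact ⟨fun h => hS _ h _ he.1.ne' he.2.symm, fun h => hS _ h _ he.1.ne he.2⟩

end Collisions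

lemma abs_measureReal_sub_le_of_forall_notMem {Ω : Type*} [MeasurableSpace Ω] {μ : Measure Ω}
    [IsFiniteMeasure μ] {A B E : Set Ω} (h : ∀ ω ∉ E, ω ∈ A ↔ ω ∈ B) :
    |μ.real A - μ.real B| ≤ μ.real E := by
  have hsub : ∀ {A B : Set Ω}, (∀ ω ∉ E, ω ∈ A → ω ∈ B) → μ.real A ≤ μ.real B + μ.real E :=
    fun {A B} h => (measureReal_mono fun ω hω => (em (ω ∈ E)).elim .inr fun hE => .inl
      (h ω hE hω)).trans (measureReal_union_le B E)
  rw [abs_sub_le_iff]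
  constructor <;> linarith [hsub fun ω hω => (h ω hω).1, hsub fun ω hω => (h ω hω).2]

lemma sum_range_measureReal_eq_one_sub {Ω : Type*} [MeasurableSpace Ω] {μ : Measure Ω}
    [IsProbabilityMeasure μ] {N : Ω → ℕ} (hN : Measurable N) (K : ℕ) :
    ∑ m ∈ range K, μ.real {ω | N ω = m} = 1 - μ.real {ω | K ≤ N ω} := by
  have hunion : ⋃ m ∈ range K, {ω | N ω = m} = {ω | K ≤ N ω}ᶜ := by
    ext ω
    simp
  rw [← probReal_compl_eq_one_sub (measurableSet_le measurable_const hN), ← hunion,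
    measureReal_biUnion_finset (f := fun m => {ω | N ω = m}) (fun m _ m' _ hm => Set.disjoint_left.2
      fun ω (h : N ω = m) (h' : N ω = m') => hm (h.symm.trans h'))
      fun m _ => hN (measurableSet_singleton m)]

lemma sum_range_measureReal_le_one {Ω : Type*} [MeasurableSpace Ω] {μ : Measure Ω}
    [IsProbabilityMeasure μ] {N : Ω → ℕ} (hN : Measurable N) (K : ℕ) :
    ∑ m ∈ range K, μ.real {ω | N ω = m} ≤ 1 := by
  rw [sum_range_measureReal_eq_one_sub hN]
  linarith [measureReal_nonneg (μ := μ) (s := {ω | K ≤ N ω})]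

lemma card_eq_sum_indicator {Ω β : Type*} {U : Finset β} {C : Ω → Finset β}
    (hCU : ∀ ω, C ω ⊆ U) (ω : Ω) :
    (#(C ω) : ℝ) = ∑ e ∈ U, {ω | e ∈ C ω}.indicator 1 ω := by
  classical
  simp only [Set.indicator_apply, Set.mem_ofPred_eq, Pi.one_apply]
  rw [sum_boole, filter_mem_eq_inter, inter_eq_right.2 (hCU ω)]

section RandomFinset

variable {Ω β : Type*} [MeasurableSpace Ω] {μ : Measure Ω} [IsFiniteMeasure μ]
  {U : Finset β} {C : Ω → Finset β}

lemma setIntegral_card_eq_sum_measureReal (hCU : ∀ ω, C ω ⊆ U)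
    (hC : ∀ e, MeasurableSet {ω | e ∈ C ω}) (A : Set Ω) :
    ∫ ω in A, (#(C ω) : ℝ) ∂μ = ∑ e ∈ U, μ.real ({ω | e ∈ C ω} ∩ A) := by
  simp_rw [card_eq_sum_indicator hCU]
  rw [integral_finsetSum _ fun e _ => ((integrable_const 1).indicator (hC e))]
  refine sum_congr rfl fun e _ => ?_
  rw [integral_indicator_one (hC e), measureReal_restrict_apply (hC e)]

lemma natCast_mul_measureReal_card_eq (hCU : ∀ ω, C ω ⊆ U)
    (hC : ∀ e, MeasurableSet {ω | e ∈ C ω}) {k : ℕ} (hk : MeasurableSet {ω | #(C ω) = k}) :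
    k * μ.real {ω | #(C ω) = k} = ∑ e ∈ U, μ.real ({ω | e ∈ C ω} ∩ {ω | #(C ω) = k}) := by
  rw [← setIntegral_card_eq_sum_measureReal hCU hC, setIntegral_congr_fun hk
    (g := fun _ => (k : ℝ)) fun ω (hω : #(C ω) = k) => by simp [hω], setIntegral_const,
    smul_eq_mul, mul_comm]

lemma natCast_mul_measureReal_le_card_le (hCU : ∀ ω, C ω ⊆ U)
    (hC : ∀ e, MeasurableSet {ω | e ∈ C ω}) (K : ℕ) :
    K * μ.real {ω | K ≤ #(C ω)} ≤ ∑ e ∈ U, μ.real {ω | e ∈ C ω} := by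
  have hint : Integrable (fun ω => (#(C ω) : ℝ)) μ := by
    simp_rw [card_eq_sum_indicator hCU]
    exact integrable_finsetSum _ fun e _ => (integrable_const 1).indicator (hC e)
  have hmarkov := mul_meas_ge_le_integral_of_nonneg (.of_forall fun ω => by positivity) hint K
  rw [← setIntegral_univ, setIntegral_card_eq_sum_measureReal hCU hC] at hmarkov
  simpa using hmarkov

end RandomFinset

lemma setOf_eq_preimage_restrict_of_dependsOn {Ω ι α : Type*} {X : ι → Ω → α}
    {P : (ι → α) → Prop} {S : Finset ι} (hP : DependsOn P S) :
    {ω | P fun i => X i ω} =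
      (fun ω (i : S) => X i ω) ⁻¹' {g | ∃ x : ι → α, (∀ i : S, x i = g i) ∧ P x} := by
  ext ω
  refine ⟨fun h => ⟨_, fun _ => rfl, h⟩, fun ⟨x, hx, hPx⟩ => ?_⟩
  have hxω : P x = P fun i => X i ω := hP fun i hi => hx ⟨i, hi⟩
  exact cast hxω hPx

section IndependentCoordinates

variable {Ω ι α : Type*} [MeasurableSpace Ω] {μ : Measure Ω} [MeasurableSpace α] [Countable α]
  [MeasurableSingletonClass α] {X : ι → Ω → α}

lemma measurable_comp_pi_lambda [Finite ι] {β : Type*} [MeasurableSpace β]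
    (hX : ∀ i, Measurable (X i)) (g : (ι → α) → β) : Measurable fun ω => g fun i => X i ω :=
  (Measurable.of_discrete (f := g)).comp (measurable_pi_lambda _ hX)

lemma measurableSet_setOf_pi_lambda [Finite ι] (hX : ∀ i, Measurable (X i))
    (P : (ι → α) → Prop) : MeasurableSet {ω | P fun i => X i ω} :=
  (measurable_comp_pi_lambda hX P).setOf

lemma measureReal_inter_eq_mul_of_dependsOn (hX : ∀ i, Measurable (X i)) (hind : iIndepFun X μ)
    {S T : Finset ι} (hST : Disjoint S T) {P Q : (ι → α) → Prop}
    (hP : DependsOn P S) (hQ : DependsOn Q T) :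
    μ.real ({ω | P fun i => X i ω} ∩ {ω | Q fun i => X i ω}) =
      μ.real {ω | P fun i => X i ω} * μ.real {ω | Q fun i => X i ω} := by
  rw [setOf_eq_preimage_restrict_of_dependsOn hP, setOf_eq_preimage_restrict_of_dependsOn hQ,
    measureReal_def, (hind.indepFun_finset S T hST hX).measure_inter_preimage_eq_mul _ _
      .of_discrete .of_discrete, ENNReal.toReal_mul, measureReal_def, measureReal_def]

variable {p : α → ℝ} (hX : ∀ i, Measurable (X i)) (hind : iIndepFun X μ) (hp0 : ∀ x, 0 ≤ p x)
  (hdist : ∀ i x, μ {ω | X i ω = x} = ENNReal.ofReal (p x))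
include hX hind hp0 hdist

lemma measureReal_exists_forall_eq {T : Finset ι} (hT : T.Nonempty) :
    μ.real {ω | ∃ x, ∀ i ∈ T, X i ω = x} = ∑' x, p x ^ #T := by
  have hunion : {ω | ∃ x, ∀ i ∈ T, X i ω = x} = ⋃ x, ⋂ i ∈ T, X i ⁻¹' {x} := by
    ext ω
    simp
  have hdisj : Pairwise (Function.onFun Disjoint fun x => ⋂ i ∈ T, X i ⁻¹' {x}) := by
    obtain ⟨i, hi⟩ := hT
    intro x y hxy
    refine Set.disjoint_left.2 fun ω hx hy => hxy ?_
    simp only [Set.mem_iInter, Set.mem_preimage, Set.mem_singleton_iff] at hx hy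
    rw [← hx i hi, hy i hi]
  have hatom : ∀ x, μ (⋂ i ∈ T, X i ⁻¹' {x}) = ENNReal.ofReal (p x) ^ #T := fun x => by
    rw [hind.measure_inter_preimage_eq_mul T fun _ _ => measurableSet_singleton x]
    exact (prod_congr rfl fun i _ => hdist i x).trans (prod_const _)
  rw [measureReal_def, hunion, measure_iUnion hdisj fun x =>
      T.measurableSet_biInter fun i _ => hX i (measurableSet_singleton x),
    ENNReal.tsum_toReal_eq fun x => (hatom x).symm ▸ by finiteness]
  simp [hatom, ENNReal.toReal_ofReal (hp0 _)]

lemma measureReal_eq_of_ne {a b : ι} (hab : a ≠ b) :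
    μ.real {ω | X a ω = X b ω} = ∑' x, p x ^ 2 := by
  classical
  rw [← card_pair hab, ← measureReal_exists_forall_eq hX hind hp0 hdist (insert_nonempty a {b})]
  congr 1
  ext ω
  simp only [Set.mem_ofPred_eq, mem_insert, mem_singleton, forall_eq_or_imp, forall_eq]
  exact ⟨fun h => ⟨_, h, rfl⟩, fun ⟨x, ha, hb⟩ => ha.trans hb.symm⟩

lemma measureReal_le_of_subset_biUnion [IsFiniteMeasure μ] {κ : Type*} {E : Set Ω} {𝒯 : Finset κ}
    {T : κ → Finset ι} {m N : ℕ} (hm : m ≠ 0) (hT : ∀ t ∈ 𝒯, #(T t) = m) (h𝒯 : #𝒯 ≤ N)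
    (hE : E ⊆ ⋃ t ∈ 𝒯, {ω | ∃ x, ∀ i ∈ T t, X i ω = x}) :
    μ.real E ≤ N * ∑' x, p x ^ m := by
  have hatom : ∀ t ∈ 𝒯, μ.real {ω | ∃ x, ∀ i ∈ T t, X i ω = x} = ∑' x, p x ^ m := fun t ht => by
    rw [measureReal_exists_forall_eq hX hind hp0 hdist (card_pos.1 (by rw [hT t ht]; omega)),
      hT t ht]
  calc μ.real E ≤ ∑ t ∈ 𝒯, μ.real {ω | ∃ x, ∀ i ∈ T t, X i ω = x} :=
        (measureReal_mono hE (measure_ne_top _ _)).trans (measureReal_biUnion_finset_le _ _)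
    _ = #𝒯 * ∑' x, p x ^ m := by rw [sum_congr rfl hatom, sum_const, nsmul_eq_mul]
    _ ≤ N * ∑' x, p x ^ m := by
        gcongr
        exact tsum_nonneg fun x => pow_nonneg (hp0 x) m

lemma measureReal_exists_ne_eq_le [IsFiniteMeasure μ] [Fintype ι] (S : Finset ι) :
    μ.real {ω | ∃ s ∈ S, ∃ c ≠ s, X c ω = X s ω} ≤
      (#S * Fintype.card ι : ℕ) * ∑' x, p x ^ 2 := by
  classical
  refine measureReal_le_of_subset_biUnion hX hind hp0 hdist (𝒯 := {e ∈ S ×ˢ univ | e.2 ≠ e.1})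
    (T := fun e => {e.1, e.2}) two_ne_zero (fun e he => card_pair (mem_filter.1 he).2.symm)
    ((card_filter_le _ _).trans (card_product S univ).le) ?_
  rintro ω ⟨s, hs, c, hc, hω⟩
  refine Set.mem_biUnion (x := (s, c)) (by simp [hs, hc]) ⟨X s ω, ?_⟩
  simp [hω]

lemma measureReal_eq_and_exists_eq_le [IsFiniteMeasure μ] [Fintype ι] [DecidableEq ι] {a b : ι}
    (hab : a ≠ b) :
    μ.real {ω | X a ω = X b ω ∧ ∃ c ∉ ({a, b} : Finset ι), X c ω = X a ω} ≤
      Fintype.card ι * ∑' x, p x ^ 3 := by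
  refine measureReal_le_of_subset_biUnion hX hind hp0 hdist (𝒯 := {a, b}ᶜ)
    (T := fun c => insert c {a, b}) three_ne_zero
    (fun c hc => by rw [card_insert_of_notMem (mem_compl.1 hc), card_pair hab])
    (card_le_univ _) ?_
  rintro ω ⟨hω, c, hc, hca⟩
  refine Set.mem_biUnion (mem_compl.2 hc) ⟨X a ω, ?_⟩
  simp [hca, ← hω]

lemma measureReal_not_noTripleCollision_le [IsFiniteMeasure μ] [Fintype ι] [LinearOrder ι] :
    μ.real {ω | ¬NoTripleCollision fun i => X i ω} ≤ (Fintype.card ι ^ 3 : ℕ) * ∑' x, p x ^ 3 := by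
  refine measureReal_le_of_subset_biUnion hX hind hp0 hdist
    (𝒯 := {t : ι × ι × ι | t.1 < t.2.1 ∧ t.2.1 < t.2.2}) (T := fun t => {t.1, t.2.1, t.2.2})
    three_ne_zero (fun t ht => ?_) ((card_filter_le _ _).trans (by simp [pow_succ, mul_assoc])) ?_
  · obtain ⟨h₁, h₂⟩ := (mem_filter.1 ht).2
    rw [card_insert_of_notMem (by simp [h₁.ne, (h₁.trans h₂).ne]), card_pair h₂.ne]
  · intro ω hω
    simp only [NoTripleCollision, not_forall, not_not, Set.mem_ofPred_eq] at hω
    obtain ⟨i, j, k, hij, hjk, h₁, h₂⟩ := hω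
    refine Set.mem_biUnion (x := (i, j, k)) (by simp [hij, hjk]) ⟨X j ω, ?_⟩
    simp [h₁, h₂]

lemma abs_measureReal_card_sub_card_image_sub_le [IsFiniteMeasure μ] [Fintype ι] [LinearOrder ι]
    [DecidableEq α] (k : ℕ) :
    |μ.real {ω | Fintype.card ι - #(univ.image fun i => X i ω) = k} -
      μ.real {ω | #(collisions fun i => X i ω) = k}| ≤
      (Fintype.card ι ^ 3 : ℕ) * ∑' x, p x ^ 3 := by
  refine (abs_measureReal_sub_le_of_forall_notMem fun ω hω => ?_).trans
    (measureReal_not_noTripleCollision_le hX hind hp0 hdist)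
  rw [Set.mem_ofPred_eq, Set.mem_ofPred_eq,
    card_sub_card_image_eq_card_collisions (not_not.1 hω)]

end IndependentCoordinates

section CollisionCounts

variable {Ω ι α : Type*} [MeasurableSpace Ω] {μ : Measure Ω} [IsProbabilityMeasure μ]
  [Fintype ι] [LinearOrder ι] [MeasurableSpace α] [Countable α] [MeasurableSingletonClass α]
  [DecidableEq α] {X : ι → Ω → α} {p : α → ℝ}
  (hX : ∀ i, Measurable (X i)) (hind : iIndepFun X μ) (hp0 : ∀ x, 0 ≤ p x)
  (hdist : ∀ i x, μ {ω | X i ω = x} = ENNReal.ofReal (p x))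
include hX hind hp0 hdist

lemma abs_measureReal_mem_collisions_inter_sub_collisionsAwayFrom_le {a b : ι} (hab : a < b)
    {k : ℕ} (hk : k ≠ 0) :
    |μ.real ({ω | (a, b) ∈ collisions fun i => X i ω} ∩ {ω | #(collisions fun i => X i ω) = k}) -
      μ.real ({ω | X a ω = X b ω} ∩ {ω | #(collisionsAwayFrom {a, b} fun i => X i ω) = k - 1})| ≤
      Fintype.card ι * ∑' x, p x ^ 3 := by
  refine (abs_measureReal_sub_le_of_forall_notMem fun ω hω => ?_).trans
    (measureReal_eq_and_exists_eq_le hX hind hp0 hdist hab.ne)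
  by_cases h : X a ω = X b ω
  · have hcard := card_collisions_eq_card_collisionsAwayFrom_add_one hab h
      fun c hc hca => hω ⟨h, c, hc, hca⟩
    simp only [Set.mem_inter_iff, Set.mem_ofPred_eq, mem_collisions, hab, h, true_and]
    omega
  · simp [h]

lemma abs_measureReal_card_collisionsAwayFrom_sub_le (S : Finset ι) (m : ℕ) :
    |μ.real {ω | #(collisionsAwayFrom S fun i => X i ω) = m} -
      μ.real {ω | #(collisions fun i => X i ω) = m}| ≤
      (#S * Fintype.card ι : ℕ) * ∑' x, p x ^ 2 := by
  refine (abs_measureReal_sub_le_of_forall_notMem fun ω hω => ?_).trans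
    (measureReal_exists_ne_eq_le hX hind hp0 hdist S)
  rw [Set.mem_ofPred_eq, Set.mem_ofPred_eq,
    collisionsAwayFrom_eq_collisions fun s hs c hc h => hω ⟨s, hs, c, hc, h⟩]

lemma abs_measureReal_mem_collisions_inter_sub_le {a b : ι} (hab : a < b) {k : ℕ} (hk : k ≠ 0) :
    |μ.real ({ω | (a, b) ∈ collisions fun i => X i ω} ∩
        {ω | #(collisions fun i => X i ω) = k}) -
      (∑' x, p x ^ 2) * μ.real {ω | #(collisions fun i => X i ω) = k - 1}| ≤
      Fintype.card ι * ∑' x, p x ^ 3 +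
        (∑' x, p x ^ 2) * ((2 * Fintype.card ι : ℕ) * ∑' x, p x ^ 2) := by
  set S : Finset ι := {a, b}
  set qS := μ.real {ω | #(collisionsAwayFrom S fun i => X i ω) = k - 1}
  have hs₂ : 0 ≤ ∑' x, p x ^ 2 := tsum_nonneg fun x => sq_nonneg (p x)
  have hindep : μ.real ({ω | X a ω = X b ω} ∩
      {ω | #(collisionsAwayFrom S fun i => X i ω) = k - 1}) = (∑' x, p x ^ 2) * qS := by
    rw [measureReal_inter_eq_mul_of_dependsOn hX hind (disjoint_compl_right (a := S))
      (P := fun f => f a = f b) (Q := fun f => #(collisionsAwayFrom S f) = k - 1) ?_ ?_,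
      measureReal_eq_of_ne hX hind hp0 hdist hab.ne]
    · intro f g hfg
      dsimp only
      rw [hfg a (by simp [S]), hfg b (by simp [S])]
    · intro f g hfg
      dsimp only
      rw [dependsOn_collisionsAwayFrom S (by simpa using hfg)]
  have hpair := abs_measureReal_mem_collisions_inter_sub_collisionsAwayFrom_le hX hind hp0 hdist
    hab hk
  have haway := abs_measureReal_card_collisionsAwayFrom_sub_le hX hind hp0 hdist S (k - 1)
  rw [hindep] at hpair
  rw [card_pair hab.ne] at haway
  refine (abs_sub_le _ ((∑' x, p x ^ 2) * qS) _).trans (add_le_add hpair ?_)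
  rw [← mul_sub, abs_mul, abs_of_nonneg hs₂]
  exact mul_le_mul_of_nonneg_left haway hs₂

lemma abs_natCast_mul_measureReal_card_collisions_sub_le {k : ℕ} (hk : k ≠ 0) :
    |k * μ.real {ω | #(collisions fun i => X i ω) = k} -
      (Fintype.card ι).choose 2 * (∑' x, p x ^ 2) *
        μ.real {ω | #(collisions fun i => X i ω) = k - 1}| ≤
      (Fintype.card ι).choose 2 * (Fintype.card ι * ∑' x, p x ^ 3 +
        (∑' x, p x ^ 2) * ((2 * Fintype.card ι : ℕ) * ∑' x, p x ^ 2)) := by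
  rw [natCast_mul_measureReal_card_eq (fun ω => collisions_subset_filter_lt _)
    (fun e => measurableSet_setOf_pi_lambda hX (e ∈ collisions ·))
    (measurableSet_setOf_pi_lambda hX fun f => #(collisions f) = k),
    ← Fintype.card_product_filter_lt, mul_assoc, ← nsmul_eq_mul, ← sum_const, ← sum_sub_distrib,
    ← nsmul_eq_mul, ← sum_const]
  exact (abs_sum_le_sum_abs _ _).trans (sum_le_sum fun e he =>
    abs_measureReal_mem_collisions_inter_sub_le hX hind hp0 hdist (mem_filter.1 he).2 hk)

lemma natCast_mul_measureReal_le_card_collisions_le (K : ℕ) :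
    K * μ.real {ω | K ≤ #(collisions fun i => X i ω)} ≤
      (Fintype.card ι).choose 2 * ∑' x, p x ^ 2 := by
  refine (natCast_mul_measureReal_le_card_le (fun ω => collisions_subset_filter_lt _)
    (fun e => measurableSet_setOf_pi_lambda hX (e ∈ collisions ·)) K).trans_eq ?_
  rw [← Fintype.card_product_filter_lt, ← nsmul_eq_mul, ← sum_const]
  refine sum_congr rfl fun e he => ?_
  rw [← measureReal_eq_of_ne hX hind hp0 hdist (mem_filter.1 he).2.ne]
  simp [(mem_filter.1 he).2]

lemma natCast_mul_one_sub_sum_range_measureReal_card_collisions_le (K : ℕ) :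
    K * (1 - ∑ m ∈ range K, μ.real {ω | #(collisions fun i => X i ω) = m}) ≤
      (Fintype.card ι).choose 2 * ∑' x, p x ^ 2 := by
  rw [sum_range_measureReal_eq_one_sub (measurable_comp_pi_lambda hX fun f => #(collisions f)),
    sub_sub_cancel]
  exact natCast_mul_measureReal_le_card_collisions_le hX hind hp0 hdist K

end CollisionCounts

section PoissonLimit

variable {q : ℕ → ℕ → ℝ} {lamn : ℕ → ℝ} {lam : ℝ}

lemma tendsto_sub_pow_div_factorial_mul (hlamn : Tendsto lamn atTop (𝓝 lam))
    (hrec : ∀ m : ℕ, Tendsto (fun n => (m + 1) * q n (m + 1) - lamn n * q n m) atTop (𝓝 0))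
    (m : ℕ) : Tendsto (fun n => q n m - lamn n ^ m / m.factorial * q n 0) atTop (𝓝 0) := by
  induction m with
  | zero => simp
  | succ m ih =>
    have h := ((hrec m).add (hlamn.mul ih)).const_mul ((m : ℝ) + 1)⁻¹
    rw [mul_zero, add_zero, mul_zero] at h
    refine h.congr fun n => ?_
    rw [Nat.factorial_succ]
    push_cast
    field_simp
    ring

lemma tendsto_of_forall_eventually_abs_sub_le {β : Type*} {l : Filter β} {a : β → ℝ} {L : ℝ}
    {c : ℕ → ℝ} (hc : Tendsto c atTop (𝓝 0)) (h : ∀ K, ∀ᶠ n in l, |a n - L| ≤ c K) :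
    Tendsto a l (𝓝 L) := by
  refine Metric.tendsto_nhds.2 fun ε hε => ?_
  obtain ⟨K, hK⟩ := (hc.eventually (gt_mem_nhds hε)).exists
  filter_upwards [h K] with n hn
  rw [Real.dist_eq]
  linarith

lemma one_le_sum_range_pow_div_factorial {x : ℝ} (hx : 0 ≤ x) (K : ℕ) :
    1 ≤ ∑ m ∈ range (K + 1), x ^ m / m.factorial := by
  rw [sum_range_succ']
  simp only [pow_zero, Nat.factorial_zero, Nat.cast_one, div_one, le_add_iff_nonneg_left]
  positivity

lemma tendsto_inv_sum_range_pow_div_factorial (x : ℝ) :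
    Tendsto (fun K => (∑ m ∈ range (K + 1), x ^ m / m.factorial)⁻¹) atTop (𝓝 (exp (-x))) := by
  have h := ((NormedSpace.expSeries_div_hasSum_exp x).tendsto_sum_nat.comp
    (tendsto_add_atTop_nat 1)).inv₀ (Real.exp_eq_exp_ℝ ▸ (exp_pos x).ne')
  rwa [← Real.exp_eq_exp_ℝ, ← Real.exp_neg] at h

lemma abs_sub_inv_le_of_abs_sub_mul_le {x s t ε η : ℝ} (ht : 1 ≤ t) (hs : s ≤ 1) (hη : 1 - s ≤ η)
    (hε : |s - t * x| ≤ ε) : |x - t⁻¹| ≤ η + ε := by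
  have hnorm : |t * x - 1| ≤ η + ε := by
    obtain ⟨hε₁, hε₂⟩ := abs_le.1 hε
    exact abs_le.2 ⟨by linarith, by linarith⟩
  rw [show x - t⁻¹ = (t * x - 1) / t by field_simp, abs_div, abs_of_pos (a := t) (by linarith)]
  exact (div_le_self (abs_nonneg _) ht).trans hnorm

lemma tendsto_poisson_zero_of_recursion (hlamn0 : ∀ n, 0 ≤ lamn n)
    (hlamn : Tendsto lamn atTop (𝓝 lam))
    (hrec : ∀ m : ℕ, Tendsto (fun n => (m + 1) * q n (m + 1) - lamn n * q n m) atTop (𝓝 0))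
    (hmass : ∀ n K, ∑ m ∈ range K, q n m ≤ 1)
    (htail : ∀ n K, K * (1 - ∑ m ∈ range K, q n m) ≤ lamn n) :
    Tendsto (fun n => q n 0) atTop (𝓝 (exp (-lam))) := by
  have hlam : 0 ≤ lam := ge_of_tendsto' hlamn hlamn0
  -- `∑_{m ≤ K} q n m` is close to `q n 0 * T K (lamn n)` and lies in `[1 - lamn n / (K + 1), 1]`:
  -- let `n → ∞`, then `K → ∞`.
  set T : ℕ → ℝ → ℝ := fun K x => ∑ m ∈ range (K + 1), x ^ m / m.factorial
  refine tendsto_of_forall_eventually_abs_sub_le (c := fun K =>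
    (lam + 3) * (1 / ((K : ℝ) + 1)) + |(T K lam)⁻¹ - exp (-lam)|) ?_ fun K => ?_
  · simpa using (tendsto_one_div_add_atTop_nhds_zero_nat.const_mul (lam + 3)).add
      ((tendsto_inv_sum_range_pow_div_factorial lam).sub_const (exp (-lam))).abs
  set δ : ℝ := 1 / ((K : ℝ) + 1)
  have hδ : 0 < δ := by positivity
  have hsum : Tendsto (fun n => ∑ m ∈ range (K + 1), q n m - T K (lamn n) * q n 0)
      atTop (𝓝 0) := by
    simpa [T, sum_sub_distrib, sum_mul] using
      tendsto_finsetSum (range (K + 1)) fun m _ => tendsto_sub_pow_div_factorial_mul hlamn hrec m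
  have hTinv : Tendsto (fun n => (T K (lamn n))⁻¹) atTop (𝓝 (T K lam)⁻¹) :=
    (tendsto_finsetSum _ fun m _ => (hlamn.pow m).div_const _).inv₀
      ((one_le_sum_range_pow_div_factorial hlam K).trans_lt' one_pos).ne'
  filter_upwards [Metric.tendsto_nhds.1 hsum δ hδ, Metric.tendsto_nhds.1 hTinv δ hδ,
    hlamn.eventually (ge_mem_nhds (lt_add_one lam))] with n h₁ h₂ h₃
  rw [Real.dist_eq, sub_zero] at h₁
  rw [Real.dist_eq] at h₂
  have hmass' : 1 - ∑ m ∈ range (K + 1), q n m ≤ (lam + 1) * δ := by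
    have h := (htail n (K + 1)).trans h₃
    rw [Nat.cast_succ] at h
    rw [mul_one_div, le_div_iff₀ (by positivity)]
    linarith
  have hx := abs_sub_inv_le_of_abs_sub_mul_le (one_le_sum_range_pow_div_factorial (hlamn0 n) K)
    (hmass n (K + 1)) hmass' h₁.le
  linarith [abs_sub_le (q n 0) (T K (lamn n))⁻¹ (exp (-lam)),
    abs_sub_le (T K (lamn n))⁻¹ (T K lam)⁻¹ (exp (-lam))]

theorem tendsto_poisson_of_recursion (hlamn0 : ∀ n, 0 ≤ lamn n)
    (hlamn : Tendsto lamn atTop (𝓝 lam))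
    (hrec : ∀ m : ℕ, Tendsto (fun n => (m + 1) * q n (m + 1) - lamn n * q n m) atTop (𝓝 0))
    (hmass : ∀ n K, ∑ m ∈ range K, q n m ≤ 1)
    (htail : ∀ n K, K * (1 - ∑ m ∈ range K, q n m) ≤ lamn n) (m : ℕ) :
    Tendsto (fun n => q n m) atTop (𝓝 (exp (-lam) * lam ^ m / m.factorial)) := by
  have h := (tendsto_sub_pow_div_factorial_mul hlamn hrec m).add
    (((hlamn.pow m).div_const (m.factorial : ℝ)).mul
      (tendsto_poisson_zero_of_recursion hlamn0 hlamn hrec hmass htail))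
  simp_rw [sub_add_cancel, zero_add] at h
  convert h using 2
  ring

end PoissonLimit

section ProbabilityVector

variable {β : Type*} {q : β → ℝ}

lemma summable_of_tsum_eq_one (hq1 : ∑' j, q j = 1) : Summable q := by
  by_contra hs
  rw [tsum_eq_zero_of_not_summable hs] at hq1
  exact zero_ne_one hq1

lemma tsum_mul_le_mul_tsum {w y : β → ℝ} {u : ℝ} (hw0 : ∀ j, 0 ≤ w j) (hy0 : ∀ j, 0 ≤ y j)
    (hyu : ∀ j, y j ≤ u) (hw : Summable w) : ∑' j, w j * y j ≤ u * ∑' j, w j := by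
  have hle : ∀ j, w j * y j ≤ u * w j := fun j => by
    rw [mul_comm]
    exact mul_le_mul_of_nonneg_right (hyu j) (hw0 j)
  rw [← tsum_mul_left]
  exact ((hw.mul_left u).of_nonneg_of_le (fun j => mul_nonneg (hw0 j) (hy0 j)) hle).tsum_le_tsum
    hle (hw.mul_left u)

variable (hq0 : ∀ j, 0 ≤ q j) (hq1 : ∑' j, q j = 1)
include hq0 hq1

lemma le_one_of_tsum_eq_one (j : β) : q j ≤ 1 :=
  ((summable_of_tsum_eq_one hq1).le_tsum j fun i _ => hq0 i).trans_eq hq1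

lemma mul_le_iSup_mul {x : ℝ} (hx : 0 ≤ x) (j : β) : q j * x ≤ ⨆ i, q i * x :=
  le_ciSup ⟨x, by
    rintro _ ⟨i, rfl⟩
    exact mul_le_of_le_one_left hx (le_one_of_tsum_eq_one hq0 hq1 i)⟩ j

lemma mul_tsum_sq_le_iSup {x : ℝ} (hx : 0 ≤ x) : x * ∑' j, q j ^ 2 ≤ ⨆ j, q j * x :=
  calc x * ∑' j, q j ^ 2 = ∑' j, q j * (q j * x) := by
        rw [← tsum_mul_left]
        exact tsum_congr fun j => by ring
    _ ≤ (⨆ j, q j * x) * ∑' j, q j :=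
        tsum_mul_le_mul_tsum hq0 (fun j => mul_nonneg (hq0 j) hx) (mul_le_iSup_mul hq0 hq1 hx)
          (summable_of_tsum_eq_one hq1)
    _ = ⨆ j, q j * x := by rw [hq1, mul_one]

lemma pow_three_mul_tsum_cube_le {x : ℝ} (hx : 0 ≤ x) :
    x ^ 3 * ∑' j, q j ^ 3 ≤ (⨆ j, q j * x) * (x ^ 2 * ∑' j, q j ^ 2) := by
  have hsq : Summable fun j => (q j * x) ^ 2 := by
    refine ((summable_of_tsum_eq_one hq1).mul_left (x ^ 2)).of_nonneg_of_le
      (fun j => sq_nonneg _) fun j => ?_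
    rw [mul_pow, mul_comm]
    exact mul_le_mul_of_nonneg_left (pow_le_of_le_one (hq0 j) (le_one_of_tsum_eq_one hq0 hq1 j)
      two_ne_zero) (sq_nonneg x)
  calc x ^ 3 * ∑' j, q j ^ 3 = ∑' j, (q j * x) ^ 2 * (q j * x) := by
        rw [← tsum_mul_left]
        exact tsum_congr fun j => by ring
    _ ≤ (⨆ j, q j * x) * ∑' j, (q j * x) ^ 2 :=
        tsum_mul_le_mul_tsum (fun j => sq_nonneg _) (fun j => mul_nonneg (hq0 j) hx)
          (mul_le_iSup_mul hq0 hq1 hx) hsq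
    _ = (⨆ j, q j * x) * (x ^ 2 * ∑' j, q j ^ 2) := by
        rw [← tsum_mul_left (a := x ^ 2)]
        exact congrArg _ (tsum_congr fun j => by ring)

end ProbabilityVector

section Asymptotics

variable {p : ℕ → ℕ → ℝ} {lam : ℝ}

lemma tendsto_sq_mul_tsum_sq
    (hsum : Tendsto (fun n => (1 / 2 : ℝ) * ∑' j, (p n j * n) ^ 2) atTop (𝓝 lam)) :
    Tendsto (fun n : ℕ => (n : ℝ) ^ 2 * ∑' j, p n j ^ 2) atTop (𝓝 (2 * lam)) := by
  refine (hsum.const_mul 2).congr fun n => ?_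
  rw [← mul_assoc, ← tsum_mul_left, ← tsum_mul_left]
  exact tsum_congr fun j => by ring

variable (hp0 : ∀ n j, 0 ≤ p n j) (hp1 : ∀ n, ∑' j, p n j = 1)
  (hsup : Tendsto (fun n => ⨆ j, p n j * n) atTop (𝓝 0))
include hp0 hp1 hsup

lemma tendsto_mul_tsum_sq : Tendsto (fun n : ℕ => (n : ℝ) * ∑' j, p n j ^ 2) atTop (𝓝 0) :=
  squeeze_zero (fun n => mul_nonneg n.cast_nonneg (tsum_nonneg fun j => sq_nonneg (p n j)))
    (fun n => mul_tsum_sq_le_iSup (hp0 n) (hp1 n) n.cast_nonneg) hsup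

variable (hsum : Tendsto (fun n => (1 / 2 : ℝ) * ∑' j, (p n j * n) ^ 2) atTop (𝓝 lam))
include hsum

lemma tendsto_choose_two_mul_tsum_sq :
    Tendsto (fun n : ℕ => (n.choose 2 : ℝ) * ∑' j, p n j ^ 2) atTop (𝓝 lam) := by
  have h := ((tendsto_sq_mul_tsum_sq hsum).sub (tendsto_mul_tsum_sq hp0 hp1 hsup)).div_const 2
  rw [sub_zero, mul_div_cancel_left₀ _ two_ne_zero] at h
  refine h.congr fun n => ?_
  rw [Nat.cast_choose_two]
  ring

lemma tendsto_pow_three_mul_tsum_cube :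
    Tendsto (fun n : ℕ => (n : ℝ) ^ 3 * ∑' j, p n j ^ 3) atTop (𝓝 0) := by
  have h := hsup.mul (tendsto_sq_mul_tsum_sq hsum)
  rw [zero_mul] at h
  exact squeeze_zero
    (fun n => mul_nonneg (by positivity) (tsum_nonneg fun j => pow_nonneg (hp0 n j) 3))
    (fun n => pow_three_mul_tsum_cube_le (hp0 n) (hp1 n) n.cast_nonneg) h

lemma tendsto_collision_error :
    Tendsto (fun n : ℕ => (n.choose 2 : ℝ) * (n * ∑' j, p n j ^ 3 +
      (∑' j, p n j ^ 2) * ((2 * n : ℕ) * ∑' j, p n j ^ 2))) atTop (𝓝 0) := by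
  have h := (tendsto_pow_three_mul_tsum_cube hp0 hp1 hsup hsum).add
    ((tendsto_mul_tsum_sq hp0 hp1 hsup).mul (tendsto_sq_mul_tsum_sq hsum))
  rw [zero_mul, add_zero] at h
  have hs₂ : ∀ n, 0 ≤ ∑' j, p n j ^ 2 := fun n => tsum_nonneg fun j => sq_nonneg (p n j)
  have hs₃ : ∀ n, 0 ≤ ∑' j, p n j ^ 3 := fun n => tsum_nonneg fun j => pow_nonneg (hp0 n j) 3
  refine squeeze_zero (fun n => by have := hs₂ n; have := hs₃ n; positivity) (fun n => ?_) h
  have hs₂ := hs₂ n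
  have hs₃ := hs₃ n
  calc _ ≤ (n : ℝ) ^ 2 / 2 * (n * ∑' j, p n j ^ 3 +
        (∑' j, p n j ^ 2) * ((2 * n : ℕ) * ∑' j, p n j ^ 2)) := by
        gcongr
        simpa using Nat.choose_le_pow_div (α := ℝ) 2 n
    _ ≤ _ := by
        push_cast
        nlinarith [mul_nonneg (pow_nonneg n.cast_nonneg 3 (M₀ := ℝ)) hs₃]

end Asymptotics

theorem poisson_limit_n_sub_Z_general
    (Ω : ℕ → Type) (mΩ : ∀ n, MeasurableSpace (Ω n))
    (μ : ∀ n, Measure (Ω n)) (hμ : ∀ n, IsProbabilityMeasure (μ n))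
    (p : ℕ → ℕ → ℝ) (hp0 : ∀ n j, 0 ≤ p n j) (hp1 : ∀ n, (∑' j, p n j) = 1)
    (X : ∀ n, Fin n → Ω n → ℕ)
    (hmeas : ∀ n i, Measurable (X n i))
    (hindep : ∀ n, iIndepFun (X n) (μ n))
    (hdist : ∀ n i j, μ n {ω | X n i ω = j} = ENNReal.ofReal (p n j))
    (lam : ℝ)
    (hsum : Tendsto (fun n => (1 / 2 : ℝ) * ∑' j, (p n j * n) ^ 2) atTop (𝓝 lam))
    (hsup : Tendsto (fun n => ⨆ j, p n j * n) atTop (𝓝 0)) :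
    ∀ k : ℕ,
      Tendsto
        (fun n => (μ n {ω | n - (Finset.univ.image (fun i => X n i ω)).card = k}).toReal)
        atTop (𝓝 (Real.exp (-lam) * lam ^ k / k.factorial)) := by
  intro k
  have hD : ∀ m, Tendsto (fun n => (μ n).real {ω | #(collisions fun i => X n i ω) = m}) atTop
      (𝓝 (exp (-lam) * lam ^ m / m.factorial)) := by
    refine tendsto_poisson_of_recursion (fun n => ?_)
      (tendsto_choose_two_mul_tsum_sq hp0 hp1 hsup hsum) (fun m => ?_) (fun n K => ?_)
      (fun n K => ?_)
    · exact mul_nonneg (Nat.cast_nonneg _) (tsum_nonneg fun j => sq_nonneg (p n j))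
    · refine squeeze_zero_norm (fun n => ?_) (tendsto_collision_error hp0 hp1 hsup hsum)
      have := hμ n
      simpa using abs_natCast_mul_measureReal_card_collisions_sub_le (hmeas n) (hindep n) (hp0 n)
        (hdist n) m.succ_ne_zero
    · have := hμ n
      exact sum_range_measureReal_le_one
        (measurable_comp_pi_lambda (hmeas n) fun f => #(collisions f)) K
    · have := hμ n
      simpa using natCast_mul_one_sub_sum_range_measureReal_card_collisions_le (hmeas n)
        (hindep n) (hp0 n) (hdist n) K
  have hZD : Tendsto (fun n => (μ n).real {ω | n - #(univ.image fun i => X n i ω) = k} -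
      (μ n).real {ω | #(collisions fun i => X n i ω) = k}) atTop (𝓝 0) := by
    refine squeeze_zero_norm (fun n => ?_) (tendsto_pow_three_mul_tsum_cube hp0 hp1 hsup hsum)
    have := hμ n
    simpa using abs_measureReal_card_sub_card_image_sub_le (hmeas n) (hindep n) (hp0 n) (hdist n) k
  simpa [measureReal_def] using hZD.add (hD k)

/-- Theorem 8.2: if `(1/2)∑_j (p^{(n)}_j n)² → λ < ∞` and
`sup_j p^{(n)}_j n → 0`, then `n − Z_n` converges in distribution to `Po(λ)`,
i.e. `ℙ(n − Z_n = k) → e^{−λ} λ^k / k!` for every `k ∈ ℕ`. -/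
theorem poisson_limit_n_sub_Z
    (Ω : ℕ → Type) (mΩ : ∀ n, MeasurableSpace (Ω n))
    (μ : ∀ n, Measure (Ω n)) (hμ : ∀ n, IsProbabilityMeasure (μ n))
    (p : ℕ → ℕ → ℝ) (hp0 : ∀ n j, 0 ≤ p n j) (hp1 : ∀ n, (∑' j, p n j) = 1)
    (X : ∀ n, Fin n → Ω n → ℕ)
    (hmeas : ∀ n i, Measurable (X n i))
    (hindep : ∀ n, iIndepFun (X n) (μ n))
    (hdist : ∀ n i j, μ n {ω | X n i ω = j} = ENNReal.ofReal (p n j))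
    (lam : ℝ) (hlam : 0 ≤ lam)
    (hsum : Tendsto (fun n => (1 / 2 : ℝ) * ∑' j, (p n j * n) ^ 2) atTop (𝓝 lam))
    (hsup : Tendsto (fun n => ⨆ j, p n j * n) atTop (𝓝 0)) :
    ∀ k : ℕ,
      Tendsto
        (fun n => (μ n {ω | n - (Finset.univ.image (fun i => X n i ω)).card = k}).toReal)
        atTop (𝓝 (Real.exp (-lam) * lam ^ k / k.factorial)) :=
  poisson_limit_n_sub_Z_general Ω mΩ μ hμ p hp0 hp1 X hmeas hindep hdist lam hsum hsup
end
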